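/- arXiv:math/0406378 — 9 statements merged into one kernel-verified Lean document; each statement's English description precedes it below -/
import Mathlib

section
/- For all nonnegative integers n with n ≥ 1 and 1 ≤ k ≤ n, a(n,k) = B(2n-k-1, n-1), i.e., the coefficient of x^(n-k) in the (n-1)st Bessel polynomial y_{n-1}(x) equals the number of partitions of [2n-k-1] into n-1 blocks of size one or two. -/
set_option linter.unusedSectionVars false

def bb : ℕ → ℕ → ℕ
  | 0, 0 => 1
  | 0, _ + 1 => 0
  | _ + 1, 0 => 0
  | m + 1, j + 1 => bb m j + m * bb (m - 1) j

lemma bb_zero_of_lt : ∀ m j, m < j → bb m j = 0 := by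
  intro m
  induction m using Nat.strong_induction_on with
  | _ m ih =>
    intro j h
    match m, j with
    | 0, j + 1 => rfl
    | m + 1, j + 1 =>
      rw [bb, ih m (by omega) j (by omega), ih (m - 1) (by omega) j (by omega)]
      simp

lemma bb_zero_of_gt : ∀ m j, 2 * j < m → bb m j = 0 := by
  intro m
  induction m using Nat.strong_induction_on with
  | _ m ih =>
    intro j h
    match m, j with
    | m + 1, 0 => rfl
    | m + 1, j + 1 =>
      rw [bb, ih m (by omega) j (by omega), ih (m - 1) (by omega) j (by omega)]
      simp

lemma bb_formula : ∀ N p s, p + s = N →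
    (2 : ℚ) ^ p * (Nat.factorial p) * (Nat.factorial s) * bb (2 * p + s) (p + s)
      = Nat.factorial (2 * p + s) := by
  intro N
  induction N with
  | zero =>
    intro p s h
    obtain ⟨rfl, rfl⟩ : p = 0 ∧ s = 0 := by omega
    norm_num [bb, Nat.factorial]
  | succ N ih =>
    intro p s h
    match p, s with
    | 0, 0 => omega
    | 0, t + 1 =>
      have e1 := ih 0 t (by omega)
      simp only [Nat.mul_zero, Nat.zero_add, pow_zero, Nat.factorial_zero, Nat.cast_one,
        one_mul] at e1 ⊢
      rw [show t + 1 = t + 1 from rfl, bb]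
      rcases Nat.eq_zero_or_pos t with rfl | ht
      · norm_num [bb, Nat.factorial]
      · rw [bb_zero_of_lt (t - 1) t (by omega)]
        have hbb : bb t t = 1 := by
          have hf : (Nat.factorial t : ℚ) ≠ 0 := by
            exact_mod_cast Nat.cast_ne_zero.mpr (Nat.factorial_ne_zero t)
          have : (Nat.factorial t : ℚ) * bb t t = Nat.factorial t * 1 := by
            rw [mul_one]; exact e1
          exact_mod_cast mul_left_cancel₀ hf this
        rw [hbb]
        rw [Nat.factorial_succ]
        push_cast
        ring
    | q + 1, t + 1 =>
      have e1 := ih (q + 1) t (by omega)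
      have e2 := ih q (t + 1) (by omega)
      rw [show 2 * (q + 1) + t = 2 * q + t + 2 from by ring,
        show q + 1 + t = q + t + 1 from by ring] at e1
      rw [show 2 * q + (t + 1) = 2 * q + t + 1 from by ring,
        show q + (t + 1) = q + t + 1 from by ring] at e2
      rw [show 2 * (q + 1) + (t + 1) = (2 * q + t + 2) + 1 from by ring,
        show (q + 1) + (t + 1) = (q + t + 1) + 1 from by ring, bb,
        show 2 * q + t + 2 - 1 = 2 * q + t + 1 from by omega]
      rw [Nat.factorial_succ (2 * q + t + 2), Nat.factorial_succ (2 * q + t + 1),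
        Nat.factorial_succ t, Nat.factorial_succ q, pow_succ]
      rw [Nat.factorial_succ (2 * q + t + 1), Nat.factorial_succ q] at e1
      rw [Nat.factorial_succ t] at e2
      push_cast at e1 e2 ⊢
      linear_combination ((t : ℚ) + 1) * e1 + 2 * (2 * (q : ℚ) + t + 2) * ((q : ℚ) + 1) * e2
    | q + 1, 0 =>
      have e := ih q 0 (by omega)
      rw [show 2 * q + 0 = 2 * q from by ring, show q + 0 = q from by ring] at e
      rw [show 2 * (q + 1) + 0 = (2 * q + 1) + 1 from by ring,
        show (q + 1) + 0 = q + 1 from by ring, bb,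
        bb_zero_of_gt (2 * q + 1) q (by omega),
        show 2 * q + 1 - 1 = 2 * q from by omega]
      rw [Nat.factorial_succ (2 * q + 1), Nat.factorial_succ (2 * q),
        Nat.factorial_succ q, pow_succ]
      push_cast at e ⊢
      linear_combination 2 * ((q : ℚ) + 1) * (2 * (q : ℚ) + 1) * e

variable {α : Type*} [DecidableEq α]

def GoodOn (s : Finset α) (P : Finset (Finset α)) (j : ℕ) : Prop :=
  (∀ b ∈ P, b ⊆ s ∧ (b.card = 1 ∨ b.card = 2)) ∧
  (∀ i ∈ s, ∃! b, b ∈ P ∧ i ∈ b) ∧ P.card = j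

noncomputable def cnt2 (s : Finset α) (j : ℕ) : ℕ :=
  Nat.card {P : Finset (Finset α) // GoodOn s P j}

lemma goodOn_empty_iff {P : Finset (Finset α)} {j : ℕ} :
    GoodOn (∅ : Finset α) P j ↔ P = ∅ ∧ j = 0 := by
  constructor
  · rintro ⟨h1, _, h3⟩
    have hP : P = ∅ := by
      rw [Finset.eq_empty_iff_forall_notMem]
      intro b hb
      obtain ⟨hsub, hcard⟩ := h1 b hb
      have : b = ∅ := Finset.subset_empty.mp hsub
      subst this
      simp at hcard
    exact ⟨hP, by rw [← h3, hP]; simp⟩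
  · rintro ⟨rfl, rfl⟩
    refine ⟨by simp, by simp, by simp⟩

lemma cnt2_empty_zero : cnt2 (∅ : Finset α) 0 = 1 := by
  have : Unique {P : Finset (Finset α) // GoodOn (∅ : Finset α) P 0} := by
    refine ⟨⟨⟨∅, goodOn_empty_iff.mpr ⟨rfl, rfl⟩⟩⟩, ?_⟩
    rintro ⟨P, hP⟩
    exact Subtype.ext (goodOn_empty_iff.mp hP).1
  rw [cnt2]
  exact Nat.card_unique

lemma cnt2_empty_succ (j : ℕ) : cnt2 (∅ : Finset α) (j + 1) = 0 := by
  have : IsEmpty {P : Finset (Finset α) // GoodOn (∅ : Finset α) P (j + 1)} := by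
    refine ⟨fun ⟨P, hP⟩ => ?_⟩
    exact absurd (goodOn_empty_iff.mp hP).2 (Nat.succ_ne_zero j)
  rw [cnt2]
  exact Nat.card_of_isEmpty

lemma cnt2_zero_of_nonempty {s : Finset α} (hs : s.Nonempty) : cnt2 s 0 = 0 := by
  obtain ⟨a, ha⟩ := hs
  have : IsEmpty {P : Finset (Finset α) // GoodOn s P 0} := by
    refine ⟨fun ⟨P, h1, h2, h3⟩ => ?_⟩
    obtain ⟨b, ⟨hbP, _⟩, _⟩ := h2 a ha
    rw [Finset.card_eq_zero.mp h3] at hbP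
    simp at hbP
  rw [cnt2]
  exact Nat.card_of_isEmpty

/-- Removing a fixed block `c` from partitions containing it. -/
lemma cnt2_block (s : Finset α) (c : Finset α) (hcs : c ⊆ s)
    (hc : c.card = 1 ∨ c.card = 2) (j : ℕ) :
    Nat.card {P : Finset (Finset α) // GoodOn s P (j + 1) ∧ c ∈ P} = cnt2 (s \ c) j := by
  have hcne : c.Nonempty := by
    rw [← Finset.card_pos]; rcases hc with h | h <;> omega
  rw [cnt2]
  apply Nat.card_congr
  refine ⟨fun ⟨P, hP, hcP⟩ => ⟨P.erase c, ?_⟩, fun ⟨Q, hQ⟩ => ⟨insert c Q, ?_, Finset.mem_insert_self c Q⟩, ?_, ?_⟩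
  · obtain ⟨h1, h2, h3⟩ := hP
    refine ⟨?_, ?_, ?_⟩
    · intro b hb
      obtain ⟨hbc, hbP⟩ := Finset.mem_erase.mp hb
      refine ⟨fun x hx => Finset.mem_sdiff.mpr ⟨(h1 b hbP).1 hx, fun hxc => ?_⟩, (h1 b hbP).2⟩
      obtain ⟨b', -, hu⟩ := h2 x ((h1 b hbP).1 hx)
      exact hbc ((hu b ⟨hbP, hx⟩).trans (hu c ⟨hcP, hxc⟩).symm)
    · intro i hi
      obtain ⟨his, hic⟩ := Finset.mem_sdiff.mp hi
      obtain ⟨b, ⟨hbP, hib⟩, hu⟩ := h2 i his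
      have hbc : b ≠ c := fun h => hic (h ▸ hib)
      exact ⟨b, ⟨Finset.mem_erase.mpr ⟨hbc, hbP⟩, hib⟩,
        fun b' ⟨hb', hib'⟩ => hu b' ⟨(Finset.mem_erase.mp hb').2, hib'⟩⟩
    · rw [Finset.card_erase_of_mem hcP, h3]; rfl
  · obtain ⟨h1, h2, h3⟩ := hQ
    have hcQ : c ∉ Q := by
      intro hcQ
      obtain ⟨x, hx⟩ := hcne
      exact (Finset.mem_sdiff.mp ((h1 c hcQ).1 hx)).2 hx
    refine ⟨?_, ?_, ?_⟩
    · intro b hb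
      rcases Finset.mem_insert.mp hb with rfl | hbQ
      · exact ⟨hcs, hc⟩
      · exact ⟨(h1 b hbQ).1.trans (Finset.sdiff_subset), (h1 b hbQ).2⟩
    · intro i hi
      by_cases hic : i ∈ c
      · refine ⟨c, ⟨Finset.mem_insert_self c Q, hic⟩, ?_⟩
        rintro b' ⟨hb', hib'⟩
        rcases Finset.mem_insert.mp hb' with rfl | hbQ
        · rfl
        · exact absurd hic (Finset.mem_sdiff.mp ((h1 b' hbQ).1 hib')).2
      · obtain ⟨b, ⟨hbQ, hib⟩, hu⟩ := h2 i (Finset.mem_sdiff.mpr ⟨hi, hic⟩)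
        refine ⟨b, ⟨Finset.mem_insert_of_mem hbQ, hib⟩, ?_⟩
        rintro b' ⟨hb', hib'⟩
        rcases Finset.mem_insert.mp hb' with rfl | hbQ'
        · exact absurd hib' hic
        · exact hu b' ⟨hbQ', hib'⟩
    · rw [Finset.card_insert_of_notMem hcQ, h3]
  · rintro ⟨P, hP, hcP⟩
    exact Subtype.ext (Finset.insert_erase hcP)
  · rintro ⟨Q, hQ⟩
    have hcQ : c ∉ Q := by
      intro hcQ
      obtain ⟨x, hx⟩ := hcne
      exact (Finset.mem_sdiff.mp ((hQ.1 c hcQ).1 hx)).2 hx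
    exact Subtype.ext (Finset.erase_insert hcQ)

lemma nat_card_split {γ : Type*} [Fintype γ] (p q : γ → Prop) :
    Nat.card {x // p x} = Nat.card {x // p x ∧ q x} + Nat.card {x // p x ∧ ¬ q x} := by
  classical
  simp only [Nat.card_eq_fintype_card, Fintype.card_subtype]
  rw [← Finset.filter_filter, ← Finset.filter_filter,
    Finset.card_filter_add_card_filter_not]

lemma part2 [Fintype α] (s : Finset α) (a : α) (ha : a ∈ s) (j : ℕ) :
    Nat.card {P : Finset (Finset α) // GoodOn s P (j + 1) ∧ ¬ (({a} : Finset α) ∈ P)} =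
      ∑ b ∈ s.erase a,
        Nat.card {P : Finset (Finset α) // GoodOn s P (j + 1) ∧ ({a, b} : Finset α) ∈ P} := by
  classical
  simp only [Nat.card_eq_fintype_card, Fintype.card_subtype]
  rw [show Finset.univ.filter (fun P : Finset (Finset α) =>
        GoodOn s P (j + 1) ∧ ¬ (({a} : Finset α) ∈ P))
      = (s.erase a).biUnion (fun b => Finset.univ.filter (fun P : Finset (Finset α) =>
        GoodOn s P (j + 1) ∧ ({a, b} : Finset α) ∈ P)) from ?_]
  · rw [Finset.card_biUnion]
    intro b hb b' hb' hbb'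
    rw [Function.onFun, Finset.disjoint_left]
    rintro P hP hP'
    obtain ⟨hG, habP⟩ := (Finset.mem_filter.mp hP).2
    obtain ⟨-, habP'⟩ := (Finset.mem_filter.mp hP').2
    obtain ⟨b0, -, hu⟩ := hG.2.1 a ha
    have : ({a, b} : Finset α) = {a, b'} :=
      (hu _ ⟨habP, by simp⟩).trans (hu _ ⟨habP', by simp⟩).symm
    have hbmem : b ∈ ({a, b'} : Finset α) := this ▸ (by simp : b ∈ ({a, b} : Finset α))
    simp only [Finset.mem_insert, Finset.mem_singleton] at hbmem
    rcases hbmem with rfl | rfl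
    · exact (Finset.mem_erase.mp hb).1 rfl
    · exact hbb' rfl
  · ext P
    simp only [Finset.mem_filter, Finset.mem_univ, true_and, Finset.mem_biUnion]
    constructor
    · rintro ⟨hG, hna⟩
      obtain ⟨b0, ⟨hb0P, hab0⟩, hu⟩ := hG.2.1 a ha
      obtain ⟨hb0s, hcard⟩ := hG.1 b0 hb0P
      rcases hcard with h1 | h2
      · obtain ⟨x, rfl⟩ := Finset.card_eq_one.mp h1
        rw [Finset.mem_singleton] at hab0
        exact absurd (hab0 ▸ hb0P) hna
      · have : (b0.erase a).card = 1 := by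
          rw [Finset.card_erase_of_mem hab0, h2]
        obtain ⟨c, hc⟩ := Finset.card_eq_one.mp this
        have hca : c ≠ a := by
          have : c ∈ b0.erase a := hc ▸ Finset.mem_singleton_self c
          exact (Finset.mem_erase.mp this).1
        have hcb0 : c ∈ b0 := by
          have : c ∈ b0.erase a := hc ▸ Finset.mem_singleton_self c
          exact (Finset.mem_erase.mp this).2
        have hb0eq : b0 = {a, c} := by
          rw [← Finset.insert_erase hab0, hc]
        exact ⟨c, Finset.mem_erase.mpr ⟨hca, hb0s hcb0⟩, hG, hb0eq ▸ hb0P⟩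
    · rintro ⟨b, hb, hG, habP⟩
      refine ⟨hG, fun haP => ?_⟩
      obtain ⟨b0, -, hu⟩ := hG.2.1 a ha
      have : ({a} : Finset α) = {a, b} :=
        (hu _ ⟨haP, by simp⟩).trans (hu _ ⟨habP, by simp⟩).symm
      have : b ∈ ({a} : Finset α) := this ▸ (by simp : b ∈ ({a, b} : Finset α))
      exact (Finset.mem_erase.mp hb).1 (Finset.mem_singleton.mp this)

lemma cnt2_rec [Fintype α] (s : Finset α) (a : α) (ha : a ∈ s) (j : ℕ) :
    cnt2 s (j + 1) = cnt2 (s.erase a) j +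
      ∑ b ∈ s.erase a, cnt2 ((s.erase a).erase b) j := by
  classical
  rw [cnt2, nat_card_split _ (fun P => ({a} : Finset α) ∈ P)]
  congr 1
  · rw [cnt2_block s {a} (Finset.singleton_subset_iff.mpr ha) (Or.inl (Finset.card_singleton a)) j,
      Finset.sdiff_singleton_eq_erase]
  · rw [part2 s a ha j]
    refine Finset.sum_congr rfl fun b hb => ?_
    obtain ⟨hba, hbs⟩ := Finset.mem_erase.mp hb
    rw [cnt2_block s {a, b} (Finset.insert_subset ha (Finset.singleton_subset_iff.mpr hbs))
      (Or.inr (Finset.card_pair (Ne.symm hba))) j]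
    congr 1
    rw [show ({a, b} : Finset α) = insert a {b} from rfl, Finset.sdiff_insert,
      Finset.sdiff_singleton_eq_erase, Finset.erase_right_comm]

lemma cnt2_eq_bb [Fintype α] (s : Finset α) : ∀ j, cnt2 s j = bb s.card j := by
  induction s using Finset.strongInduction with
  | _ s ih =>
    intro j
    rcases s.eq_empty_or_nonempty with rfl | ⟨a, ha⟩
    · cases j with
      | zero => simpa [bb] using cnt2_empty_zero
      | succ j => simpa [bb] using cnt2_empty_succ (α := α) j
    · have hcardpos : 0 < s.card := Finset.card_pos.mpr ⟨a, ha⟩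
      obtain ⟨m, hm⟩ : ∃ m, s.card = m + 1 := ⟨s.card - 1, by omega⟩
      cases j with
      | zero =>
        rw [cnt2_zero_of_nonempty ⟨a, ha⟩, hm]
        rfl
      | succ j =>
        rw [cnt2_rec s a ha j, ih (s.erase a) (Finset.erase_ssubset ha) j]
        have hsum : ∀ b ∈ s.erase a, cnt2 ((s.erase a).erase b) j = bb (s.card - 2) j := by
          intro b hb
          rw [ih ((s.erase a).erase b)
            (((s.erase a).erase_subset b).trans_ssubset (Finset.erase_ssubset ha)) j,
            Finset.card_erase_of_mem hb, Finset.card_erase_of_mem ha,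
            show s.card - 1 - 1 = s.card - 2 from by omega]
        rw [Finset.sum_congr rfl hsum, Finset.sum_const, smul_eq_mul,
          Finset.card_erase_of_mem ha, hm, bb,
          show m + 1 - 1 = m from by omega, show m + 1 - 2 = m - 1 from by omega]

/-- `besselB n k` is the number of set partitions of `[n]` into `k` blocks,
each of size one or two (the Bessel number of the second kind). -/
noncomputable def besselB (n k : ℕ) : ℕ :=
  Nat.card {P : Finset (Finset (Fin n)) //
    (∀ b ∈ P, b.card = 1 ∨ b.card = 2) ∧
    (∀ i : Fin n, ∃! b, b ∈ P ∧ i ∈ b) ∧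
    P.card = k}

/-- The signless Bessel number of the first kind `a(n,k)`, the coefficient of
`x^(n-k)` in the Bessel polynomial `y_{n-1}(x)`. -/
def aQ (n k : ℕ) : ℚ :=
  (Nat.factorial (2 * n - k - 1) : ℚ) /
    (2 ^ (n - k) * Nat.factorial (n - k) * Nat.factorial (k - 1))


lemma besselB_eq_bb (m j : ℕ) : besselB m j = bb m j := by
  rw [besselB]
  have hiff : ∀ P : Finset (Finset (Fin m)),
      ((∀ b ∈ P, b.card = 1 ∨ b.card = 2) ∧ (∀ i : Fin m, ∃! b, b ∈ P ∧ i ∈ b) ∧ P.card = j)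
        ↔ GoodOn (Finset.univ : Finset (Fin m)) P j := by
    intro P
    constructor
    · rintro ⟨h1, h2, h3⟩
      exact ⟨fun b hb => ⟨Finset.subset_univ b, h1 b hb⟩, fun i _ => h2 i, h3⟩
    · rintro ⟨h1, h2, h3⟩
      exact ⟨fun b hb => (h1 b hb).2, fun i => h2 i (Finset.mem_univ i), h3⟩
  rw [Nat.card_congr (Equiv.subtypeEquivRight hiff)]
  rw [← cnt2, cnt2_eq_bb, Finset.card_univ, Fintype.card_fin]

theorem stmt_2 (n k : ℕ) (hn : 1 ≤ n) (hk1 : 1 ≤ k) (hkn : k ≤ n) :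
    aQ n k = (besselB (2 * n - k - 1) (n - 1) : ℚ) := by
  have key := bb_formula ((n - k) + (k - 1)) (n - k) (k - 1) rfl
  rw [show 2 * (n - k) + (k - 1) = 2 * n - k - 1 from by omega,
    show (n - k) + (k - 1) = n - 1 from by omega] at key
  rw [besselB_eq_bb, aQ]
  have hne : ((2 : ℚ) ^ (n - k) * (Nat.factorial (n - k) : ℚ) * (Nat.factorial (k - 1) : ℚ)) ≠ 0 := by
    positivity
  rw [div_eq_iff hne]
  linarith [key]
end

section
/- For every nonnegative integer n, the nth Bessel polynomial y_n(x) = Σ_{k=0}^{n} ((n+k)!/(2^k · k! · (n-k)!)) x^k satisfies the differential equation x² y_n'' + (2x+2) y_n' = n(n+1) y_n. -/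
/-!
Writing `y_n = Σ a_k x^k`, the coefficient of `x^k` in `x² y'' + (2x + 2) y'` is
`k(k+1) a_k + 2(k+1) a_{k+1}`, so the equation amounts to the recurrence
`2(k+1) a_{k+1} = (n-k)(n+k+1) a_k = (n(n+1) - k(k+1)) a_k`, which follows from the factorial formula.
-/

open Polynomial

/-- The `n`th Bessel polynomial `y_n(x) = Σ_{k=0}^n ((n+k)!/(2^k k! (n-k)!)) x^k`. -/
noncomputable def besselPoly (n : ℕ) : Polynomial ℚ :=
  ∑ k ∈ Finset.range (n + 1),
    C ((Nat.factorial (n + k) : ℚ) / (2 ^ k * Nat.factorial k * Nat.factorial (n - k))) * X ^ k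

open Nat

section

variable {R : Type*} [CommSemiring R]

noncomputable def besselOperator (p : R[X]) : R[X] :=
  X ^ 2 * derivative (derivative p) + (2 * X + 2) * derivative p

theorem coeff_besselOperator (p : R[X]) (k : ℕ) :
    (besselOperator p).coeff k = k * (k + 1) * p.coeff k + 2 * (k + 1) * p.coeff (k + 1) := by
  rcases k with _ | _ | k <;>
    simp only [besselOperator, add_mul, mul_assoc, coeff_add, coeff_ofNat_mul, coeff_X_pow_mul',
      coeff_X_mul, mul_coeff_zero, coeff_X_zero, coeff_X_pow, coeff_derivative, le_add_iff_nonneg_left,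
      _root_.zero_le, not_ofNat_le_one, OfNat.zero_ne_ofNat, ↓reduceIte, reduceSubDiff, reduceAdd,
      cast_add, cast_zero, cast_one] <;> ring

end

/-- Extended by `0` beyond `k = n`, so that the recurrence below holds for every `k`. -/
noncomputable def besselCoeff (n k : ℕ) : ℚ :=
  if k ≤ n then (n + k)! / (2 ^ k * k ! * (n - k)!) else 0

theorem coeff_besselPoly (n k : ℕ) : (besselPoly n).coeff k = besselCoeff n k := by
  simp [besselPoly, besselCoeff]

theorem two_mul_succ_mul_besselCoeff_succ (n k : ℕ) :
    2 * (k + 1) * besselCoeff n (k + 1) = (n - k) * (n + k + 1) * besselCoeff n k := by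
  rcases lt_trichotomy k n with hk | rfl | hk
  · obtain ⟨m, rfl⟩ : ∃ m, n = k + 1 + m := ⟨n - (k + 1), by omega⟩
    have hsub : k + 1 + m - k = m + 1 := by omega
    simp only [besselCoeff, if_pos hk.le, if_pos (succ_le_of_lt hk), hsub, Nat.add_sub_cancel_left,
      show k + 1 + m + (k + 1) = (k + 1 + m + k) + 1 by omega, factorial_succ]
    push_cast
    field_simp
    ring
  · simp [besselCoeff]
  · simp [besselCoeff, hk.not_ge, (hk.trans (lt_succ_self k)).not_ge]

/-- `y_n` satisfies the differential equation `x² y_n'' + (2x+2) y_n' = n(n+1) y_n`. -/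
theorem stmt_3 (n : ℕ) :
    X ^ 2 * derivative (derivative (besselPoly n)) +
      (2 * X + 2) * derivative (besselPoly n) =
    C ((n : ℚ) * (n + 1)) * besselPoly n := by
  change besselOperator (besselPoly n) = _
  ext k
  rw [coeff_besselOperator, coeff_C_mul, coeff_besselPoly, coeff_besselPoly,
    two_mul_succ_mul_besselCoeff_succ]
  ring
end

section
/- For every nonnegative integer n, f_n(x) = Σ_{k=0}^{n} B(n,k) · [x]_k, where [x]_k = x(x-1)···(x-k+1) is the falling factorial and [x]_0 = 1. -/
/-- The formal power series `1 + t + t²/2` over `ℚ`. -/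
noncomputable def baseSeries : PowerSeries ℚ :=
  1 + PowerSeries.X + PowerSeries.C (1 / 2 : ℚ) * PowerSeries.X ^ 2

set_option linter.unusedSectionVars false
set_option maxHeartbeats 1000000
open Finset PowerSeries


open Finset

variable {α : Type*} [Fintype α] [DecidableEq α]

/-- `P` is a partition of `s` into `k` blocks each of size 1 or 2. -/
def isPart (s : Finset α) (k : ℕ) (P : Finset (Finset α)) : Prop :=
  (∀ b ∈ P, b ⊆ s) ∧ (∀ b ∈ P, b.card = 1 ∨ b.card = 2) ∧
    (∀ i ∈ s, ∃! b, b ∈ P ∧ i ∈ b) ∧ P.card = k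

noncomputable def partSet (s : Finset α) (k : ℕ) : Finset (Finset (Finset α)) :=
  @Finset.filter _ (isPart s k) (Classical.decPred _) Finset.univ

lemma mem_partSet {s : Finset α} {k : ℕ} {P : Finset (Finset α)} :
    P ∈ partSet s k ↔ isPart s k P := by
  classical
  simp [partSet]

lemma partSet_empty_zero : partSet (∅ : Finset α) 0 = {∅} := by
  ext P
  simp only [mem_partSet, mem_singleton, isPart]
  constructor
  · rintro ⟨hsub, hsz, -, -⟩
    rw [Finset.eq_empty_iff_forall_notMem]
    intro b hb
    have h1 := hsub b hb
    have h2 := hsz b hb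
    have : b = ∅ := Finset.subset_empty.mp h1
    rcases h2 with h | h <;> simp [this] at h
  · rintro rfl
    refine ⟨by simp, by simp, by simp, by simp⟩

lemma partSet_empty_succ (k : ℕ) : partSet (∅ : Finset α) (k+1) = ∅ := by
  ext P
  simp only [mem_partSet, Finset.notMem_empty, iff_false, isPart]
  rintro ⟨hsub, hsz, -, hcard⟩
  obtain ⟨b, hb⟩ := Finset.card_pos.mp (by omega : 0 < P.card)
  have : b = ∅ := Finset.subset_empty.mp (hsub b hb)
  rcases hsz b hb with h | h <;> simp [this] at h

lemma partSet_zero {s : Finset α} {a : α} (ha : a ∈ s) : partSet s 0 = ∅ := by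
  ext P
  simp only [mem_partSet, Finset.notMem_empty, iff_false, isPart]
  rintro ⟨-, -, hcov, hcard⟩
  obtain ⟨b, ⟨hbP, -⟩, -⟩ := hcov a ha
  exact Finset.notMem_empty b (Finset.card_eq_zero.mp hcard ▸ hbP)

lemma isPart_erase {s : Finset α} {k : ℕ} {P : Finset (Finset α)} {b0 : Finset α}
    (h : isPart s (k+1) P) (hb : b0 ∈ P) : isPart (s \ b0) k (P.erase b0) := by
  obtain ⟨hsub, hsz, hcov, hcard⟩ := h
  refine ⟨?_, fun b hbm => hsz b (Finset.mem_of_mem_erase hbm), ?_, ?_⟩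
  · intro b hbm
    obtain ⟨hne, hbP⟩ := Finset.mem_erase.mp hbm
    intro x hx
    refine Finset.mem_sdiff.mpr ⟨hsub b hbP hx, fun hxb0 => ?_⟩
    obtain ⟨c, -, hu⟩ := hcov x (hsub b hbP hx)
    exact hne ((hu b ⟨hbP, hx⟩).trans (hu b0 ⟨hb, hxb0⟩).symm)
  · intro i hi
    obtain ⟨his, hib0⟩ := Finset.mem_sdiff.mp hi
    obtain ⟨b, ⟨hbP, hib⟩, hu⟩ := hcov i his
    refine ⟨b, ⟨Finset.mem_erase.mpr ⟨fun h => hib0 (h ▸ hib), hbP⟩, hib⟩, ?_⟩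
    rintro c ⟨hcm, hic⟩
    exact hu c ⟨Finset.mem_of_mem_erase hcm, hic⟩
  · rw [Finset.card_erase_of_mem hb, hcard]; omega

lemma isPart_insert {s : Finset α} {k : ℕ} {Q : Finset (Finset α)} {b0 : Finset α}
    (h : isPart (s \ b0) k Q) (hb0s : b0 ⊆ s) (hb0sz : b0.card = 1 ∨ b0.card = 2) :
    isPart s (k+1) (insert b0 Q) := by
  obtain ⟨hsub, hsz, hcov, hcard⟩ := h
  have hb0ne : b0.Nonempty := Finset.card_pos.mp (by rcases hb0sz with h|h <;> omega)
  have hb0Q : b0 ∉ Q := by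
    intro hmem
    obtain ⟨x, hx⟩ := hb0ne
    exact (Finset.mem_sdiff.mp (hsub b0 hmem hx)).2 hx
  have hQsub : ∀ b ∈ Q, ∀ x ∈ b, x ∈ s ∧ x ∉ b0 := by
    intro b hbm x hx
    exact Finset.mem_sdiff.mp (hsub b hbm hx)
  refine ⟨?_, ?_, ?_, ?_⟩
  · intro b hbm
    rcases Finset.mem_insert.mp hbm with rfl | hbm
    · exact hb0s
    · exact fun x hx => (hQsub b hbm x hx).1
  · intro b hbm
    rcases Finset.mem_insert.mp hbm with rfl | hbm
    · exact hb0sz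
    · exact hsz b hbm
  · intro i hi
    by_cases hib0 : i ∈ b0
    · refine ⟨b0, ⟨Finset.mem_insert_self _ _, hib0⟩, ?_⟩
      rintro c ⟨hcm, hic⟩
      rcases Finset.mem_insert.mp hcm with rfl | hcm
      · rfl
      · exact absurd hib0 (hQsub c hcm i hic).2
    · obtain ⟨b, ⟨hbm, hib⟩, hu⟩ := hcov i (Finset.mem_sdiff.mpr ⟨hi, hib0⟩)
      refine ⟨b, ⟨Finset.mem_insert_of_mem hbm, hib⟩, ?_⟩
      rintro c ⟨hcm, hic⟩
      rcases Finset.mem_insert.mp hcm with rfl | hcm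
      · exact absurd hic hib0
      · exact hu c ⟨hcm, hic⟩
  · rw [Finset.card_insert_of_notMem hb0Q, hcard]

/-- Counting partitions containing a fixed block `b0`. -/
lemma card_partSet_block {s : Finset α} {k : ℕ} {b0 : Finset α}
    (hb0s : b0 ⊆ s) (hb0sz : b0.card = 1 ∨ b0.card = 2) :
    ((partSet s (k+1)).filter (fun P => b0 ∈ P)).card = (partSet (s \ b0) k).card := by
  classical
  apply Finset.card_bij' (fun P _ => P.erase b0) (fun Q _ => insert b0 Q)
  · intro P hP
    exact Finset.insert_erase (Finset.mem_filter.mp hP).2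
  · intro Q hQ
    apply Finset.erase_insert
    intro hmem
    have h := mem_partSet.mp hQ
    have hb0ne : b0.Nonempty := Finset.card_pos.mp (by rcases hb0sz with h|h <;> omega)
    obtain ⟨x, hx⟩ := hb0ne
    exact (Finset.mem_sdiff.mp (h.1 b0 hmem hx)).2 hx
  · intro P hP
    obtain ⟨hP, hb0P⟩ := Finset.mem_filter.mp hP
    exact mem_partSet.mpr (isPart_erase (mem_partSet.mp hP) hb0P)
  · intro Q hQ
    refine Finset.mem_filter.mpr ⟨mem_partSet.mpr
      (isPart_insert (mem_partSet.mp hQ) hb0s hb0sz), Finset.mem_insert_self _ _⟩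

lemma partSet_filter_not_singleton {s : Finset α} {k : ℕ} {a : α} (ha : a ∈ s) :
    (partSet s (k+1)).filter (fun P => ({a} : Finset α) ∉ P) =
      (s.erase a).biUnion
        (fun i => (partSet s (k+1)).filter (fun P => ({a, i} : Finset α) ∈ P)) := by
  classical
  ext P
  simp only [Finset.mem_filter, Finset.mem_biUnion, Finset.mem_erase]
  constructor
  · rintro ⟨hP, hna⟩
    obtain ⟨hsub, hsz, hcov, hcard⟩ := mem_partSet.mp hP
    obtain ⟨b, ⟨hbP, hab⟩, -⟩ := hcov a ha
    rcases hsz b hbP with h1 | h2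
    · obtain ⟨x, rfl⟩ := Finset.card_eq_one.mp h1
      rw [Finset.mem_singleton.mp hab] at hna
      exact absurd hbP hna
    · obtain ⟨x, y, hxy, rfl⟩ := Finset.card_eq_two.mp h2
      rcases Finset.mem_insert.mp hab with rfl | hay
      · exact ⟨y, ⟨fun h => hxy h.symm, hsub _ hbP (by simp)⟩, hP, hbP⟩
      · rw [Finset.mem_singleton.mp hay] at *
        refine ⟨x, ⟨hxy, hsub _ hbP (by simp)⟩, hP, ?_⟩
        rwa [Finset.pair_comm]
  · rintro ⟨i, ⟨hia, his⟩, hP, hbP⟩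
    refine ⟨hP, fun hsing => ?_⟩
    obtain ⟨hsub, hsz, hcov, hcard⟩ := mem_partSet.mp hP
    obtain ⟨b, -, hu⟩ := hcov a ha
    have h1 := hu _ ⟨hsing, Finset.mem_singleton_self a⟩
    have h2 := hu _ ⟨hbP, Finset.mem_insert_self a _⟩
    have : i ∈ ({a} : Finset α) := by
      rw [h1, ← h2]; simp
    exact hia (Finset.mem_singleton.mp this)

lemma card_partSet_rec {s : Finset α} {k : ℕ} {a : α} (ha : a ∈ s) :
    (partSet s (k+1)).card =
      (partSet (s.erase a) k).card + ∑ i ∈ s.erase a, (partSet (s \ {a, i}) k).card := by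
  classical
  rw [← Finset.card_filter_add_card_filter_not
    (s := partSet s (k+1)) (p := fun P => ({a} : Finset α) ∈ P)]
  congr 1
  · rw [card_partSet_block (by simpa using ha) (Or.inl (by simp)),
      Finset.sdiff_singleton_eq_erase]
  · rw [partSet_filter_not_singleton ha, Finset.card_biUnion]
    · apply Finset.sum_congr rfl
      intro i hi
      obtain ⟨hia, his⟩ := Finset.mem_erase.mp hi
      exact card_partSet_block (by intro x hx; rcases Finset.mem_insert.mp hx with rfl | hx
                                   · exact ha
                                   · exact Finset.mem_singleton.mp hx ▸ his)
        (Or.inr (Finset.card_pair (Ne.symm hia)))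
    · intro i hi j hj hij
      rw [Function.onFun, Finset.disjoint_left]
      intro P hPi hPj
      obtain ⟨hP, hbi⟩ := Finset.mem_filter.mp hPi
      obtain ⟨-, hbj⟩ := Finset.mem_filter.mp hPj
      obtain ⟨hsub, hsz, hcov, hcard⟩ := mem_partSet.mp hP
      obtain ⟨b, -, hu⟩ := hcov a ha
      have h1 := hu _ ⟨hbi, Finset.mem_insert_self a _⟩
      have h2 := hu _ ⟨hbj, Finset.mem_insert_self a _⟩
      have : j ∈ ({a, i} : Finset α) := by rw [h1, ← h2]; simp
      rcases Finset.mem_insert.mp this with rfl | h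
      · exact (Finset.mem_erase.mp hj).1 rfl
      · exact hij (Finset.mem_singleton.mp h).symm

def gB : ℕ → ℕ → ℕ
  | 0, 0 => 1
  | 0, _+1 => 0
  | 1, 0 => 0
  | 1, k+1 => gB 0 k
  | _+2, 0 => 0
  | n+2, k+1 => gB (n+1) k + (n+1) * gB n k

lemma gB_succ_zero (n : ℕ) : gB (n+1) 0 = 0 := by cases n <;> rfl

lemma gB_rec (n k : ℕ) : gB (n+1) (k+1) = gB n k + n * gB (n-1) k := by
  cases n with
  | zero => simp [gB]
  | succ n => rfl

theorem card_partSet_eq (n : ℕ) : ∀ (s : Finset α), s.card = n → ∀ k,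
    (partSet s k).card = gB n k := by
  induction n using Nat.strong_induction_on with
  | _ n ih =>
    intro s hs k
    rcases n with _ | n
    · obtain rfl := Finset.card_eq_zero.mp hs
      cases k with
      | zero => simp [partSet_empty_zero, gB]
      | succ k => simp [partSet_empty_succ, gB]
    · obtain ⟨a, ha⟩ : s.Nonempty := Finset.card_pos.mp (by omega)
      cases k with
      | zero => rw [partSet_zero ha, gB_succ_zero]; rfl
      | succ k =>
        rw [card_partSet_rec ha]
        have hcera : (s.erase a).card = n := by simp [Finset.card_erase_of_mem ha, hs]
        rw [ih n (by omega) _ hcera k]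
        have hsum : ∀ i ∈ s.erase a, (partSet (s \ {a, i}) k).card = gB (n-1) k := by
          intro i hi
          apply ih (n-1) (by omega)
          have h2 : s \ {a, i} = (s.erase a).erase i := by
            ext x
            simp only [Finset.mem_sdiff, Finset.mem_insert, Finset.mem_singleton,
              Finset.mem_erase]
            tauto
          rw [h2, Finset.card_erase_of_mem hi, hcera]
        rw [Finset.sum_congr rfl hsum, Finset.sum_const, hcera, smul_eq_mul, gB_rec]

lemma gB_eq_zero_of_lt : ∀ n k : ℕ, n < k → gB n k = 0 := by
  intro n
  induction n using Nat.strong_induction_on with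
  | _ n ih =>
    intro k hk
    rcases n with _ | _ | n
    · rcases k with _ | k
      · omega
      · rfl
    · rcases k with _ | k
      · omega
      · show gB 0 k = 0
        rcases k with _ | k
        · omega
        · rfl
    · rcases k with _ | k
      · omega
      · show gB (n+1) k + (n+1) * gB n k = 0
        rw [ih (n+1) (by omega) k (by omega), ih n (by omega) k (by omega)]
        simp



lemma coeff_baseSeries (n : ℕ) :
    coeff n baseSeries =
      if n = 0 then 1 else if n = 1 then 1 else if n = 2 then 1/2 else 0 := by
  rcases n with _ | _ | _ | n <;>
    simp [baseSeries, coeff_one, coeff_X, coeff_C_mul, coeff_X_pow]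

lemma derivative_baseSeries : d⁄dX ℚ baseSeries = 1 + X := by
  ext n
  rw [coeff_derivative, coeff_baseSeries]
  rcases n with _ | _ | n <;>
    simp [coeff_one, coeff_X] <;> norm_num

lemma constantCoeff_baseSeries : constantCoeff baseSeries = 1 := by
  have := coeff_baseSeries 0
  simpa [coeff_zero_eq_constantCoeff] using this

lemma coeff_zero_pow (m : ℕ) : coeff 0 (baseSeries ^ m) = 1 := by
  rw [coeff_zero_eq_constantCoeff, map_pow, constantCoeff_baseSeries, one_pow]

lemma derivative_baseSeries_pow (m : ℕ) :
    d⁄dX ℚ (baseSeries ^ (m+1)) = (m+1 : ℚ⟦X⟧) * (baseSeries ^ m * (1 + X)) := by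
  rw [Derivation.leibniz_pow, derivative_baseSeries]
  simp only [Nat.add_sub_cancel, smul_eq_mul, nsmul_eq_mul]
  push_cast
  ring

lemma coeff_one_pow (m : ℕ) : coeff 1 (baseSeries ^ m) = m := by
  cases m with
  | zero => simp
  | succ m =>
    have h := congrArg (coeff 0) (derivative_baseSeries_pow m)
    rw [coeff_derivative] at h
    norm_num at h
    rw [h, constantCoeff_baseSeries]
    push_cast
    ring

lemma coeff_rec (m n : ℕ) :
    ((n : ℚ) + 2) * coeff (n+2) (baseSeries ^ (m+1)) =
      ((m : ℚ) + 1) * (coeff (n+1) (baseSeries ^ m) + coeff n (baseSeries ^ m)) := by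
  have h := congrArg (coeff (n+1)) (derivative_baseSeries_pow m)
  rw [coeff_derivative] at h
  have hC : ((m : ℚ⟦X⟧) + 1) = PowerSeries.C ((m : ℚ) + 1) := by
    rw [map_add, map_one, map_natCast]
  rw [hC, coeff_C_mul] at h
  have h2 : coeff (n+1) (baseSeries ^ m * (1 + X)) =
      coeff (n+1) (baseSeries ^ m) + coeff n (baseSeries ^ m) := by
    rw [mul_add, mul_one, map_add, PowerSeries.coeff_succ_mul_X]
  rw [h2] at h
  push_cast
  push_cast at h
  linarith [h]


lemma desc_eval_succ (k : ℕ) (x : ℚ) :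
    Polynomial.eval x (descPochhammer ℚ (k+1)) =
      x * Polynomial.eval (x - 1) (descPochhammer ℚ k) := by
  rw [descPochhammer_succ_left]
  simp [Polynomial.eval_comp]

lemma desc_eval_zero (k : ℕ) :
    Polynomial.eval (0 : ℚ) (descPochhammer ℚ (k+1)) = 0 := by
  rw [desc_eval_succ, zero_mul]

lemma sum_desc_succ (n m : ℕ) :
    ∑ k ∈ Finset.range (n+3), (gB (n+2) k : ℚ) *
        Polynomial.eval ((m : ℚ) + 1) (descPochhammer ℚ k) =
      ((m : ℚ) + 1) *
        (∑ k ∈ Finset.range (n+2), (gB (n+1) k : ℚ) *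
            Polynomial.eval (m : ℚ) (descPochhammer ℚ k) +
          ((n : ℚ) + 1) * ∑ k ∈ Finset.range (n+1), (gB n k : ℚ) *
            Polynomial.eval (m : ℚ) (descPochhammer ℚ k)) := by
  rw [Finset.sum_range_succ']
  have h0 : (gB (n+2) 0 : ℚ) * Polynomial.eval ((m : ℚ) + 1) (descPochhammer ℚ 0) = 0 := by
    rw [gB_succ_zero]; simp
  rw [h0, add_zero]
  have hterm : ∀ k, (gB (n+2) (k+1) : ℚ) *
      Polynomial.eval ((m : ℚ) + 1) (descPochhammer ℚ (k+1)) =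
      ((m : ℚ) + 1) * (((gB (n+1) k : ℚ) + ((n : ℚ) + 1) * (gB n k : ℚ)) *
        Polynomial.eval (m : ℚ) (descPochhammer ℚ k)) := by
    intro k
    rw [desc_eval_succ]
    have hx : (m : ℚ) + 1 - 1 = (m : ℚ) := by ring
    rw [hx]
    have hg : gB (n+2) (k+1) = gB (n+1) k + (n+1) * gB n k := gB_rec (n+1) k
    rw [hg]
    push_cast
    ring
  rw [Finset.sum_congr rfl (fun k _ => hterm k), ← Finset.mul_sum]
  congr 1
  have hsplit : ∀ k, ((gB (n+1) k : ℚ) + ((n : ℚ) + 1) * (gB n k : ℚ)) *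
      Polynomial.eval (m : ℚ) (descPochhammer ℚ k) =
      (gB (n+1) k : ℚ) * Polynomial.eval (m : ℚ) (descPochhammer ℚ k) +
        ((n : ℚ) + 1) * ((gB n k : ℚ) * Polynomial.eval (m : ℚ) (descPochhammer ℚ k)) := by
    intro k; ring
  rw [Finset.sum_congr rfl (fun k _ => hsplit k), Finset.sum_add_distrib, ← Finset.mul_sum]
  congr 2
  rw [Finset.sum_range_succ, gB_eq_zero_of_lt n (n+1) (by omega)]
  simp

lemma main_id : ∀ n m : ℕ, (n.factorial : ℚ) * PowerSeries.coeff n (baseSeries ^ m) =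
    ∑ k ∈ Finset.range (n+1), (gB n k : ℚ) *
      Polynomial.eval (m : ℚ) (descPochhammer ℚ k) := by
  intro n
  induction n using Nat.strong_induction_on with
  | _ n ih =>
    rcases n with _ | _ | n
    · intro m
      simp [coeff_zero_pow, gB]
    · intro m
      rw [Finset.sum_range_succ, Finset.sum_range_one]
      simp only [coeff_one_pow, descPochhammer_one, Polynomial.eval_X,
        descPochhammer_zero, Polynomial.eval_one]
      norm_num [show gB 1 0 = 0 from rfl, show gB 1 1 = 1 from rfl, coeff_one_pow]
    · intro m
      cases m with
      | zero =>
        rw [pow_zero]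
        have hL : PowerSeries.coeff (n+2) (1 : ℚ⟦X⟧) = 0 := by
          rw [PowerSeries.coeff_one]; simp
        rw [hL, mul_zero]
        symm
        apply Finset.sum_eq_zero
        intro k hk
        rcases k with _ | k
        · rw [gB_succ_zero]; simp
        · rw [Nat.cast_zero, desc_eval_zero, mul_zero]
      | succ m =>
        have hrec := coeff_rec m n
        have hih1 := ih (n+1) (by omega) m
        have hih0 := ih n (by omega) m
        have hfact : ((n+2).factorial : ℚ) = ((n : ℚ) + 2) * ((n+1).factorial : ℚ) := by
          rw [Nat.factorial_succ]; push_cast; ring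
        have hfact1 : ((n+1).factorial : ℚ) = ((n : ℚ) + 1) * (n.factorial : ℚ) := by
          rw [Nat.factorial_succ]; push_cast; ring
        have hcast : ((m + 1 : ℕ) : ℚ) = (m : ℚ) + 1 := by push_cast; ring
        calc ((n+2).factorial : ℚ) * PowerSeries.coeff (n+2) (baseSeries ^ (m+1))
            = ((n+1).factorial : ℚ) *
              (((n : ℚ) + 2) * PowerSeries.coeff (n+2) (baseSeries ^ (m+1))) := by
              rw [hfact]; ring
          _ = ((n+1).factorial : ℚ) * (((m : ℚ) + 1) *
              (PowerSeries.coeff (n+1) (baseSeries ^ m) +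
                PowerSeries.coeff n (baseSeries ^ m))) := by rw [hrec]
          _ = ((m : ℚ) + 1) *
              (((n+1).factorial : ℚ) * PowerSeries.coeff (n+1) (baseSeries ^ m) +
                ((n : ℚ) + 1) *
                  ((n.factorial : ℚ) * PowerSeries.coeff n (baseSeries ^ m))) := by
              rw [hfact1]; ring
          _ = ((m : ℚ) + 1) *
              (∑ k ∈ Finset.range (n+2), (gB (n+1) k : ℚ) *
                  Polynomial.eval (m : ℚ) (descPochhammer ℚ k) +
                ((n : ℚ) + 1) * ∑ k ∈ Finset.range (n+1), (gB n k : ℚ) *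
                  Polynomial.eval (m : ℚ) (descPochhammer ℚ k)) := by
              rw [hih1, hih0]
          _ = ∑ k ∈ Finset.range (n+3), (gB (n+2) k : ℚ) *
              Polynomial.eval ((m : ℚ) + 1) (descPochhammer ℚ k) := (sum_desc_succ n m).symm
          _ = ∑ k ∈ Finset.range (n+2+1), (gB (n+2) k : ℚ) *
              Polynomial.eval (((m+1 : ℕ)) : ℚ) (descPochhammer ℚ k) := by
              rw [hcast]

lemma besselB_eq_gB (n k : ℕ) : besselB n k = gB n k := by
  classical
  have h1 : besselB n k = (partSet (Finset.univ : Finset (Fin n)) k).card := by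
    rw [besselB, Nat.card_eq_fintype_card, Fintype.card_subtype]
    congr 1
    ext P
    simp only [Finset.mem_filter, Finset.mem_univ, true_and, mem_partSet, isPart]
    constructor
    · rintro ⟨h1, h2, h3⟩
      exact ⟨fun b _ => Finset.subset_univ b, h1, fun i _ => h2 i, h3⟩
    · rintro ⟨-, h1, h2, h3⟩
      exact ⟨h1, fun i => h2 i trivial, h3⟩
  rw [h1, card_partSet_eq n Finset.univ (by simp) k]

/-- If `f_n(x)` are the polynomials with EGF `Σ f_n(x) tⁿ/n! = (1+t+t²/2)^x`
(required at every natural number value `x = m`), then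
`f_n(x) = Σ_{k=0}^n B(n,k) [x]_k`, where `[x]_k` is the falling factorial. -/
theorem stmt_5 (f : ℕ → Polynomial ℚ)
    (hf : ∀ m n : ℕ,
      Polynomial.eval (m : ℚ) (f n) =
        (Nat.factorial n : ℚ) * PowerSeries.coeff n (baseSeries ^ m)) :
    ∀ n : ℕ,
      f n = ∑ k ∈ Finset.range (n + 1),
        Polynomial.C (besselB n k : ℚ) * descPochhammer ℚ k := by
  intro n
  apply Polynomial.eq_of_infinite_eval_eq
  apply Set.Infinite.mono (s := Set.range ((↑) : ℕ → ℚ))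
  · rintro _ ⟨m, rfl⟩
    show Polynomial.eval (m : ℚ) (f n) = _
    rw [hf m n, main_id n m]
    rw [Polynomial.eval_finset_sum]
    apply Finset.sum_congr rfl
    intro k _
    rw [Polynomial.eval_mul, Polynomial.eval_C, besselB_eq_gB]
  · exact Set.infinite_range_of_injective Nat.cast_injective
end

section
/- For every nonnegative integer n, [x]_n = Σ_{k=0}^{n} b(n,k) f_k(x), where [x]_n is the falling factorial and f_k(x) is defined by Σ_{k≥0} f_k(x) t^k/k! = (1+t+t²/2)^x. -/
/-- The Bessel number of the first kind `b(n,k) = (-1)^{n-k} a(n,k)` for `1 ≤ k ≤ n`,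
with `b(0,k) = δ_{0,k}` and `b(n,k) = 0` for `k > n ≥ 1`. -/
def besselb (n k : ℕ) : ℚ :=
  if n = 0 ∧ k = 0 then 1
  else if 1 ≤ k ∧ k ≤ n then (-1) ^ (n - k) * aQ n k
  else 0

/-- Bessel numbers of the second kind. -/
def cQ (n k : ℕ) : ℚ :=
  if k ≤ n ∧ n ≤ 2 * k then
    (Nat.factorial n : ℚ) / (2 ^ (n - k) * Nat.factorial (n - k) * Nat.factorial (2 * k - n))
  else 0

lemma aQ_formula (d j : ℕ) : aQ (j + 1 + d) (j + 1) =
    (Nat.factorial (j + 2 * d) : ℚ) / (2 ^ d * Nat.factorial d * Nat.factorial j) := by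
  unfold aQ
  rw [show 2 * (j + 1 + d) - (j + 1) - 1 = j + 2 * d by omega,
    show j + 1 + d - (j + 1) = d by omega, show j + 1 - 1 = j by omega]

lemma cQ_formula (e s : ℕ) : cQ (2 * e + s) (e + s) =
    (Nat.factorial (2 * e + s) : ℚ) / (2 ^ e * Nat.factorial e * Nat.factorial s) := by
  unfold cQ
  rw [if_pos (by omega), show 2 * e + s - (e + s) = e by omega,
    show 2 * (e + s) - (2 * e + s) = s by omega]

lemma besselb_of (n k : ℕ) (h1 : 1 ≤ k) (h2 : k ≤ n) :
    besselb n k = (-1) ^ (n - k) * aQ n k := by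
  unfold besselb; rw [if_neg (by omega), if_pos ⟨h1, h2⟩]

lemma besselb_zero (n k : ℕ) (h : n < k) : besselb n k = 0 := by
  unfold besselb; rw [if_neg (by omega), if_neg (by omega)]

lemma besselb_zero_right (n : ℕ) : besselb n 0 = if n = 0 then 1 else 0 := by
  unfold besselb
  by_cases h : n = 0 <;> simp [h]

lemma cQ_zero (n k : ℕ) (h : n < k ∨ 2 * k < n) : cQ n k = 0 := by
  unfold cQ; rw [if_neg (by omega)]

lemma cQ_zero_right (n : ℕ) : cQ n 0 = if n = 0 then 1 else 0 := by
  unfold cQ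
  by_cases h : n = 0 <;> simp [h, Nat.factorial]

lemma fact_cast_ne (n : ℕ) : (Nat.factorial n : ℚ) ≠ 0 :=
  Nat.cast_ne_zero.mpr (Nat.factorial_ne_zero n)

lemma fact_cast_succ (n : ℕ) : (Nat.factorial (n + 1) : ℚ) = ((n : ℚ) + 1) * Nat.factorial n := by
  rw [Nat.factorial_succ]; push_cast; ring

lemma besselb_diag (n : ℕ) : besselb n n = 1 := by
  rcases Nat.eq_zero_or_pos n with rfl | hn
  · simp [besselb]
  · rw [besselb_of _ _ hn le_rfl, Nat.sub_self, pow_zero, one_mul,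
      show n = (n - 1) + 1 + 0 by omega, aQ_formula 0 (n - 1)]
    simp [div_self (fact_cast_ne (n - 1))]

lemma b_rec (n k : ℕ) :
    besselb (n + 1) (k + 1) = besselb n k - ((2 * n : ℚ) - (k + 1)) * besselb n (k + 1) := by
  rcases Nat.lt_or_ge n k with h | h
  · rw [besselb_zero _ _ (by omega), besselb_zero _ _ (by omega), besselb_zero _ _ (by omega)]
    ring
  by_cases hkn : k = n
  · subst hkn
    rw [besselb_diag, besselb_diag, besselb_zero _ _ (by omega)]; ring
  have hlt : k < n := by omega
  rcases Nat.eq_zero_or_pos k with rfl | hk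
  · -- k = 0
    rw [besselb_zero_right, if_neg (by omega)]
    obtain ⟨e, rfl⟩ : ∃ e, n = e + 1 := ⟨n - 1, by omega⟩
    rw [besselb_of _ _ (by omega) (by omega), besselb_of _ _ (by omega) (by omega)]
    simp only [aQ]
    rw [show e + 1 + 1 - (0 + 1) = e + 1 by omega,
      show 2 * (e + 1 + 1) - (0 + 1) - 1 = 2 * e + 2 by omega,
      show 0 + 1 - 1 = 0 by omega,
      show e + 1 - (0 + 1) = e by omega,
      show 2 * (e + 1) - (0 + 1) - 1 = 2 * e by omega]
    have E1 : (Nat.factorial (2 * e + 2) : ℚ)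
        = (2 * (e : ℚ) + 2) * (2 * (e : ℚ) + 1) * Nat.factorial (2 * e) := by
      rw [show 2 * e + 2 = (2 * e + 1) + 1 by ring, fact_cast_succ,
        show 2 * e + 1 = (2 * e) + 1 by ring, fact_cast_succ]
      push_cast; ring
    rw [E1, fact_cast_succ e]
    have h1 := fact_cast_ne (2 * e)
    have h2 := fact_cast_ne e
    have h3 : (2 : ℚ) ^ e ≠ 0 := pow_ne_zero _ two_ne_zero
    have h4 : ((e : ℚ) + 1) ≠ 0 := by positivity
    push_cast
    field_simp
    ring
  · -- 1 ≤ k < n : main case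
    obtain ⟨j, rfl⟩ : ∃ j, k = j + 1 := ⟨k - 1, by omega⟩
    obtain ⟨e, rfl⟩ : ∃ e, n = j + 2 + e := ⟨n - j - 2, by omega⟩
    rw [besselb_of _ _ (by omega) (by omega), besselb_of _ _ (by omega) (by omega),
      besselb_of _ _ (by omega) (by omega)]
    simp only [aQ]
    rw [show j + 2 + e + 1 - (j + 1 + 1) = e + 1 by omega,
      show 2 * (j + 2 + e + 1) - (j + 1 + 1) - 1 = j + 2 * e + 3 by omega,
      show j + 1 + 1 - 1 = j + 1 by omega,
      show j + 2 + e - (j + 1) = e + 1 by omega,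
      show 2 * (j + 2 + e) - (j + 1) - 1 = j + 2 * e + 2 by omega,
      show j + 1 - 1 = j by omega,
      show j + 2 + e - (j + 1 + 1) = e by omega,
      show 2 * (j + 2 + e) - (j + 1 + 1) - 1 = j + 2 * e + 1 by omega]
    have E1 : (Nat.factorial (j + 2 * e + 3) : ℚ)
        = ((j : ℚ) + 2 * e + 3) * ((j : ℚ) + 2 * e + 2) * Nat.factorial (j + 2 * e + 1) := by
      rw [show j + 2 * e + 3 = (j + 2 * e + 2) + 1 by ring, fact_cast_succ,
        show j + 2 * e + 2 = (j + 2 * e + 1) + 1 by ring, fact_cast_succ]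
      push_cast; ring
    have E2 : (Nat.factorial (j + 2 * e + 2) : ℚ)
        = ((j : ℚ) + 2 * e + 2) * Nat.factorial (j + 2 * e + 1) := by
      rw [show j + 2 * e + 2 = (j + 2 * e + 1) + 1 by ring, fact_cast_succ]
      push_cast; ring
    rw [E1, E2, fact_cast_succ e, fact_cast_succ j]
    have h1 := fact_cast_ne (j + 2 * e + 1)
    have h2 := fact_cast_ne e
    have h5 := fact_cast_ne j
    have h3 : (2 : ℚ) ^ e ≠ 0 := pow_ne_zero _ two_ne_zero
    have h4 : ((e : ℚ) + 1) ≠ 0 := by positivity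
    have h6 : ((j : ℚ) + 1) ≠ 0 := by positivity
    push_cast
    field_simp
    ring

lemma cQ_diag (n : ℕ) : cQ n n = 1 := by
  unfold cQ
  rw [if_pos (by omega), Nat.sub_self, show 2 * n - n = n by omega]
  simp [div_self (fact_cast_ne n)]

lemma c_rec (n k : ℕ) :
    cQ (n + 1) (k + 1) = cQ n k + (n : ℚ) * cQ (n - 1) k := by
  rcases Nat.lt_or_ge n k with h | h
  · rw [cQ_zero _ _ (by omega), cQ_zero _ _ (by omega), cQ_zero _ _ (by omega)]; ring
  rcases Nat.lt_or_ge (2 * k + 1) n with h2 | h2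
  · rw [cQ_zero _ _ (by omega), cQ_zero _ _ (by omega), cQ_zero _ _ (by omega)]; ring
  by_cases hkn : k = n
  · subst hkn
    rcases Nat.eq_zero_or_pos k with rfl | hk
    · norm_num [cQ_diag]
    · rw [cQ_diag, cQ_diag, cQ_zero _ _ (by omega)]; ring
  -- now k < n ≤ 2k+1
  by_cases hn2 : n = 2 * k + 1
  · subst hn2
    rw [cQ_zero (2*k+1) k (by omega)]
    unfold cQ
    rw [if_pos (by omega), if_pos (by omega),
      show 2 * k + 1 + 1 - (k + 1) = k + 1 by omega,
      show 2 * (k + 1) - (2 * k + 1 + 1) = 0 by omega,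
      show 2 * k + 1 - 1 - k = k by omega,
      show 2 * k - (2 * k + 1 - 1) = 0 by omega,
      show 2 * k + 1 - 1 = 2 * k by omega]
    have E1 : (Nat.factorial (2 * k + 1 + 1) : ℚ)
        = (2 * (k : ℚ) + 2) * (2 * (k : ℚ) + 1) * Nat.factorial (2 * k) := by
      rw [show 2 * k + 1 + 1 = (2 * k + 1) + 1 by ring, fact_cast_succ,
        show 2 * k + 1 = (2 * k) + 1 by ring, fact_cast_succ]
      push_cast; ring
    rw [E1, fact_cast_succ k]
    have h1 := fact_cast_ne (2 * k)
    have h2 := fact_cast_ne k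
    have h3 : (2 : ℚ) ^ k ≠ 0 := pow_ne_zero _ two_ne_zero
    have h4 : ((k : ℚ) + 1) ≠ 0 := by positivity
    push_cast
    field_simp
    ring
  · -- k+1 ≤ n ≤ 2k
    obtain ⟨e, s, rfl, rfl⟩ : ∃ e s, n = 2 * e + s + 2 ∧ k = e + s + 1 :=
      ⟨n - k - 1, 2 * k - n, by omega, by omega⟩
    unfold cQ
    rw [if_pos (by omega), if_pos (by omega), if_pos (by omega),
      show 2 * e + s + 2 + 1 - (e + s + 1 + 1) = e + 1 by omega,
      show 2 * (e + s + 1 + 1) - (2 * e + s + 2 + 1) = s + 1 by omega,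
      show 2 * e + s + 2 - (e + s + 1) = e + 1 by omega,
      show 2 * (e + s + 1) - (2 * e + s + 2) = s by omega,
      show 2 * e + s + 2 - 1 - (e + s + 1) = e by omega,
      show 2 * (e + s + 1) - (2 * e + s + 2 - 1) = s + 1 by omega,
      show 2 * e + s + 2 - 1 = 2 * e + s + 1 by omega]
    have E1 : (Nat.factorial (2 * e + s + 2 + 1) : ℚ)
        = (2 * (e : ℚ) + s + 3) * (2 * (e : ℚ) + s + 2) * Nat.factorial (2 * e + s + 1) := by
      rw [show 2 * e + s + 2 + 1 = (2 * e + s + 2) + 1 by ring, fact_cast_succ,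
        show 2 * e + s + 2 = (2 * e + s + 1) + 1 by ring, fact_cast_succ]
      push_cast; ring
    have E2 : (Nat.factorial (2 * e + s + 2) : ℚ)
        = (2 * (e : ℚ) + s + 2) * Nat.factorial (2 * e + s + 1) := by
      rw [show 2 * e + s + 2 = (2 * e + s + 1) + 1 by ring, fact_cast_succ]
      push_cast; ring
    rw [E1, E2, fact_cast_succ e, fact_cast_succ s]
    have h1 := fact_cast_ne (2 * e + s + 1)
    have h2 := fact_cast_ne e
    have h5 := fact_cast_ne s
    have h3 : (2 : ℚ) ^ e ≠ 0 := pow_ne_zero _ two_ne_zero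
    have h4 : ((e : ℚ) + 1) ≠ 0 := by positivity
    have h6 : ((s : ℚ) + 1) ≠ 0 := by positivity
    push_cast
    field_simp
    ring

lemma c_aux (n k : ℕ) :
    ((2 * (k + 1) : ℚ) - n) * cQ n (k + 1) = (n : ℚ) * cQ (n - 1) k := by
  rcases Nat.eq_zero_or_pos n with rfl | hn
  · rw [cQ_zero _ _ (by omega)]; push_cast; ring
  rcases Nat.lt_or_ge n (k + 1) with h | h
  · rw [cQ_zero _ _ (by omega), cQ_zero _ _ (by omega)]; ring
  rcases Nat.lt_or_ge (2 * k + 2) n with h2 | h2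
  · rw [cQ_zero _ _ (by omega), cQ_zero _ _ (by omega)]; ring
  by_cases hn2 : n = 2 * k + 2
  · subst hn2
    rw [cQ_zero (2*k+2-1) k (by omega)]
    push_cast; ring
  · -- k+1 ≤ n ≤ 2k+1
    obtain ⟨e, s, rfl, rfl⟩ : ∃ e s, n = 2 * e + s + 1 ∧ k = e + s :=
      ⟨n - k - 1, 2 * k + 1 - n, by omega, by omega⟩
    unfold cQ
    rw [if_pos (by omega), if_pos (by omega),
      show 2 * e + s + 1 - (e + s + 1) = e by omega,
      show 2 * (e + s + 1) - (2 * e + s + 1) = s + 1 by omega,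
      show 2 * e + s + 1 - 1 - (e + s) = e by omega,
      show 2 * (e + s) - (2 * e + s + 1 - 1) = s by omega,
      show 2 * e + s + 1 - 1 = 2 * e + s by omega]
    have E1 : (Nat.factorial (2 * e + s + 1) : ℚ)
        = (2 * (e : ℚ) + s + 1) * Nat.factorial (2 * e + s) := by
      rw [show 2 * e + s + 1 = (2 * e + s) + 1 by ring, fact_cast_succ]
      push_cast; ring
    rw [E1, fact_cast_succ s]
    have h1 := fact_cast_ne (2 * e + s)
    have h2 := fact_cast_ne e
    have h5 := fact_cast_ne s
    have h3 : (2 : ℚ) ^ e ≠ 0 := pow_ne_zero _ two_ne_zero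
    have h6 : ((s : ℚ) + 1) ≠ 0 := by positivity
    push_cast
    field_simp
    ring

lemma sumX (n j : ℕ) :
    ∑ k ∈ Finset.range (n + 1), ((2 * k : ℚ) - n) * (cQ n k * besselb k (j + 1))
      = (n : ℚ) * ∑ k ∈ Finset.range (n + 1), cQ (n - 1) k * besselb (k + 1) (j + 1) := by
  rw [Finset.sum_range_succ' _ n, Finset.mul_sum, Finset.sum_range_succ]
  have h0 : besselb 0 (j + 1) = 0 := besselb_zero 0 (j + 1) (by omega)
  have hlast : (n : ℚ) * (cQ (n - 1) n * besselb (n + 1) (j + 1)) = 0 := by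
    rcases Nat.eq_zero_or_pos n with rfl | hn
    · simp
    · rw [cQ_zero (n - 1) n (by omega)]; ring
  rw [h0, hlast, add_zero]
  simp only [mul_zero, zero_mul, add_zero]
  apply Finset.sum_congr rfl
  intro k _
  have hc := c_aux n k
  push_cast at hc ⊢
  rw [← mul_assoc, hc, mul_assoc]

lemma R_succ (n j : ℕ) :
    (∑ k ∈ Finset.range (n + 2), cQ (n + 1) k * besselb k (j + 1))
      = (∑ k ∈ Finset.range (n + 1), cQ n k * besselb k j)
        + ((j + 1 : ℚ) - n) * ∑ k ∈ Finset.range (n + 1), cQ n k * besselb k (j + 1) := by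
  rw [Finset.sum_range_succ' _ (n + 1)]
  rw [cQ_zero (n + 1) 0 (by omega), zero_mul, add_zero]
  have step : ∀ k, cQ (n + 1) (k + 1) * besselb (k + 1) (j + 1)
      = cQ n k * besselb k j - ((2 * k : ℚ) - (j + 1)) * (cQ n k * besselb k (j + 1))
        + (n : ℚ) * (cQ (n - 1) k * besselb (k + 1) (j + 1)) := by
    intro k
    rw [c_rec, b_rec]
    push_cast
    ring
  rw [Finset.sum_congr rfl fun k _ => step k]
  rw [Finset.sum_add_distrib, Finset.sum_sub_distrib, ← Finset.mul_sum]
  have split : ∀ k : ℕ, ((2 * k : ℚ) - (j + 1)) * (cQ n k * besselb k (j + 1))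
      = ((2 * k : ℚ) - n) * (cQ n k * besselb k (j + 1))
        + ((n : ℚ) - (j + 1)) * (cQ n k * besselb k (j + 1)) := by
    intro k; ring
  rw [Finset.sum_congr rfl fun k _ => split k, Finset.sum_add_distrib, sumX,
    ← Finset.mul_sum]
  ring

lemma R_delta (n j : ℕ) :
    (∑ k ∈ Finset.range (n + 1), cQ n k * besselb k j)
      = if n = j then 1 else 0 := by
  induction n generalizing j with
  | zero =>
    simp only [zero_add, Finset.range_one, Finset.sum_singleton, cQ_diag, one_mul]
    unfold besselb
    rcases Nat.eq_zero_or_pos j with rfl | hj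
    · simp
    · rw [if_neg (by omega), if_neg (by omega), if_neg (by omega)]
  | succ n ih =>
    rcases Nat.eq_zero_or_pos j with rfl | hj
    · have : ∀ k ∈ Finset.range (n + 2), cQ (n + 1) k * besselb k 0 = 0 := by
        intro k _
        rcases Nat.eq_zero_or_pos k with rfl | hk
        · rw [cQ_zero (n + 1) 0 (by omega), zero_mul]
        · rw [besselb_zero_right, if_neg (by omega), mul_zero]
      rw [Finset.sum_congr rfl this, Finset.sum_const_zero, if_neg (by omega)]
    · obtain ⟨j, rfl⟩ : ∃ j', j = j' + 1 := ⟨j - 1, by omega⟩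
      rw [R_succ, ih j, ih (j + 1)]
      by_cases h1 : n = j
      · subst h1
        rw [if_pos rfl, if_neg (by omega), if_pos rfl]
        ring
      · rw [if_neg h1]
        by_cases h2 : n = j + 1
        · subst h2
          rw [if_pos rfl, if_neg (by omega)]
          push_cast; ring
        · rw [if_neg h2, if_neg (by omega)]
          ring

lemma S_delta (n j : ℕ) :
    (∑ k ∈ Finset.range (n + 1), besselb n k * cQ k j) = if n = j then 1 else 0 := by
  set N := n + j + 1 with hN
  have hnN : n < N := by omega
  have hjN : j < N := by omega
  set Mb : Matrix (Fin N) (Fin N) ℚ := fun i k => besselb i k with hMbdef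
  set Mc : Matrix (Fin N) (Fin N) ℚ := fun i k => cQ i k with hMcdef
  have hMc : Mc * Mb = 1 := by
    ext i l
    rw [Matrix.mul_apply]
    have e1 : ∀ k : Fin N, Mc i k * Mb k l = cQ i k * besselb k l := fun _ => rfl
    rw [Finset.sum_congr rfl fun k _ => e1 k, Fin.sum_univ_eq_sum_range
      (fun k => cQ i k * besselb k l) N]
    rw [← Finset.sum_subset (Finset.range_subset_range.mpr (show (i : ℕ) + 1 ≤ N by omega))
      (fun k _ hk => by
        rw [cQ_zero i k (Or.inl (by simp only [Finset.mem_range] at hk; omega)), zero_mul])]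
    rw [R_delta i l, Matrix.one_apply]
    simp [Fin.ext_iff]
  have hMb : Mb * Mc = 1 := mul_eq_one_comm.mp hMc
  have h2 : (Mb * Mc) ⟨n, hnN⟩ ⟨j, hjN⟩ = (1 : Matrix (Fin N) (Fin N) ℚ) ⟨n, hnN⟩ ⟨j, hjN⟩ := by
    rw [hMb]
  rw [Matrix.mul_apply, Matrix.one_apply] at h2
  have e1 : ∀ k : Fin N, Mb ⟨n, hnN⟩ k * Mc k ⟨j, hjN⟩ = besselb n k * cQ k j := fun _ => rfl
  rw [Finset.sum_congr rfl fun k _ => e1 k, Fin.sum_univ_eq_sum_range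
    (fun k => besselb n k * cQ k j) N] at h2
  rw [← Finset.sum_subset (Finset.range_subset_range.mpr (show n + 1 ≤ N by omega))
    (fun k _ hk => by
      rw [besselb_zero n k (by simp only [Finset.mem_range] at hk; omega), zero_mul])] at h2
  rw [h2]
  simp [Fin.ext_iff]

open PowerSeries in
lemma coeff_one_add (a : ℚ) (j i : ℕ) :
    PowerSeries.coeff i ((PowerSeries.C a * PowerSeries.X + 1) ^ j)
      = (j.choose i : ℚ) * a ^ i := by
  rw [add_pow, map_sum]
  have hterm : ∀ k, (PowerSeries.C a * PowerSeries.X) ^ k * 1 ^ (j - k)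
      * ((j.choose k : ℕ) : PowerSeries ℚ)
      = PowerSeries.C (a ^ k * (j.choose k : ℚ)) * PowerSeries.X ^ k := by
    intro k
    rw [one_pow, mul_one, mul_pow, ← map_pow, ← map_natCast (PowerSeries.C (R := ℚ)) (j.choose k),
      mul_right_comm, ← map_mul]
  rw [Finset.sum_congr rfl fun k _ => congrArg _ (hterm k)]
  rw [Finset.sum_congr rfl fun k _ => PowerSeries.coeff_C_mul_X_pow _ _ _]
  rw [Finset.sum_ite_eq (Finset.range (j + 1)) i]
  by_cases h : i ∈ Finset.range (j + 1)
  · rw [if_pos h, mul_comm]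
  · rw [if_neg h, Nat.choose_eq_zero_of_lt (by simpa [Finset.mem_range] using h)]
    simp

open PowerSeries in
lemma coeff_Y_pow (j k : ℕ) :
    PowerSeries.coeff k
        ((PowerSeries.X + PowerSeries.C (1 / 2 : ℚ) * PowerSeries.X ^ 2) ^ j)
      = if j ≤ k then (j.choose (k - j) : ℚ) * (1 / 2) ^ (k - j) else 0 := by
  rw [show (PowerSeries.X + PowerSeries.C (1 / 2 : ℚ) * PowerSeries.X ^ 2)
      = PowerSeries.X * (PowerSeries.C (1 / 2 : ℚ) * PowerSeries.X + 1) by ring]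
  rw [mul_pow, PowerSeries.coeff_X_pow_mul']
  by_cases h : j ≤ k
  · rw [if_pos h, if_pos h, coeff_one_add]
  · rw [if_neg h, if_neg h]

lemma coeff_base_pow (m k : ℕ) :
    (Nat.factorial k : ℚ) * PowerSeries.coeff k (baseSeries ^ m)
      = ∑ j ∈ Finset.range (m + 1), (Nat.descFactorial m j : ℚ) * cQ k j := by
  have hb : baseSeries
      = (PowerSeries.X + PowerSeries.C (1 / 2 : ℚ) * PowerSeries.X ^ 2) + 1 := by
    rw [baseSeries]; ring
  rw [hb, add_pow, map_sum, Finset.mul_sum]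
  apply Finset.sum_congr rfl
  intro j hj
  rw [one_pow, mul_one, ← map_natCast (PowerSeries.C (R := ℚ)) (m.choose j),
    PowerSeries.coeff_mul_C, coeff_Y_pow]
  rw [Nat.descFactorial_eq_factorial_mul_choose]
  rcases Nat.lt_or_ge k j with h1 | h1
  · rw [if_neg (by omega), cQ_zero k j (by omega)]
    ring
  rcases Nat.lt_or_ge (2 * j) k with h2 | h2
  · rw [if_pos (by omega), Nat.choose_eq_zero_of_lt (by omega), cQ_zero k j (by omega)]
    push_cast; ring
  · rw [if_pos (by omega)]
    unfold cQ
    rw [if_pos (by omega)]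
    rw [Nat.cast_choose ℚ (show k - j ≤ j by omega),
      show j - (k - j) = 2 * j - k by omega]
    have h1' := fact_cast_ne (k - j)
    have h2' := fact_cast_ne (2 * j - k)
    have h3' := fact_cast_ne j
    have h4' : (2 : ℚ) ^ (k - j) ≠ 0 := pow_ne_zero _ two_ne_zero
    push_cast
    field_simp
    have h5 : ((1 : ℚ) / 2) ^ (k - j) * 2 ^ (k - j) = 1 := by rw [← mul_pow]; norm_num
    linear_combination ((m.choose j : ℕ) : ℚ) * h5


/-- If `f_k(x)` are the polynomials with EGF `Σ f_k(x) t^k/k! = (1+t+t²/2)^x`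
(required at every natural number value `x = m`), then
`[x]_n = Σ_{k=0}^n b(n,k) f_k(x)`. -/
theorem stmt_6 (f : ℕ → Polynomial ℚ)
    (hf : ∀ m k : ℕ,
      Polynomial.eval (m : ℚ) (f k) =
        (Nat.factorial k : ℚ) * PowerSeries.coeff k (baseSeries ^ m)) :
    ∀ n : ℕ,
      descPochhammer ℚ n =
        ∑ k ∈ Finset.range (n + 1), Polynomial.C (besselb n k) * f k := by
  intro n
  apply Polynomial.eq_of_infinite_eval_eq
  apply Set.infinite_of_injective_forall_mem (f := (Nat.cast : ℕ → ℚ)) Nat.cast_injective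
  intro m
  simp only [Set.mem_setOf_eq]
  rw [Polynomial.eval_finset_sum]
  have hterm : ∀ k ∈ Finset.range (n + 1),
      Polynomial.eval (m : ℚ) (Polynomial.C (besselb n k) * f k)
        = besselb n k * ∑ j ∈ Finset.range (m + 1), (Nat.descFactorial m j : ℚ) * cQ k j := by
    intro k _
    rw [Polynomial.eval_mul, Polynomial.eval_C, hf m k, coeff_base_pow]
  rw [Finset.sum_congr rfl hterm,
    Finset.sum_congr rfl (fun k _ => Finset.mul_sum _ _ _), Finset.sum_comm]
  have inner : ∀ j ∈ Finset.range (m + 1),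
      (∑ k ∈ Finset.range (n + 1), besselb n k * ((Nat.descFactorial m j : ℚ) * cQ k j))
        = (Nat.descFactorial m j : ℚ) * (if n = j then 1 else 0) := by
    intro j _
    rw [← S_delta n j, Finset.mul_sum]
    exact Finset.sum_congr rfl fun k _ => by ring
  rw [Finset.sum_congr rfl inner]
  simp only [mul_ite, mul_one, mul_zero]
  rw [Finset.sum_ite_eq (Finset.range (m + 1)) n, descPochhammer_eval_eq_descFactorial ℚ m n]
  by_cases h : n ∈ Finset.range (m + 1)
  · rw [if_pos h]
  · rw [if_neg h,
      Nat.descFactorial_eq_zero_iff_lt.mpr (by simp only [Finset.mem_range] at h; omega)]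
    simp
end

section
/- For all n ≥ 0 and k ≥ 1, the Bessel numbers of the second kind satisfy B(n,k-1) · B(n,k+1) ≤ B(n,k)², i.e., the sequence {B(n,k)}_{k≥0} is log-concave. -/
/-!
A partition of a finite set into blocks of size one or two is the same thing as an involution
(its two-element blocks are the transpositions), and the partitions of `Fin n` into `k` blocks
correspond to the permutations of cycle type `2^(n-k)`. Counting those permutations gives
`B(n,k) * ((2k-n)! * 2^(n-k) * (n-k)!) = n!`, so log-concavity of `k ↦ B(n,k)` reduces to
log-convexity of these denominators, i.e. of the factorials and of `2^j`.
-/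

open Finset Equiv Nat

theorem Finset.eq_of_pair_eq_pair_left {α : Type*} [DecidableEq α] {x y z : α}
    (h : ({x, y} : Finset α) = {x, z}) : y = z := by
  have := congrArg ((↑) : Finset α → Set α) h
  push_cast at this
  rcases Set.pair_eq_pair_iff.1 this with ⟨-, h⟩ | ⟨rfl, rfl⟩
  exacts [h, rfl]

theorem Equiv.Perm.apply_apply_of_sq_eq_one {α : Type*} {σ : Perm α} (hσ : σ ^ 2 = 1) (x : α) :
    σ (σ x) = x := by
  rw [← Perm.mul_apply, ← sq, hσ, Perm.one_apply]

theorem Equiv.Perm.cycleType_eq_replicate_two_iff {α : Type*} [Fintype α] [DecidableEq α]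
    {σ : Perm α} {j : ℕ} :
    σ.cycleType = Multiset.replicate j 2 ↔ σ ^ 2 = 1 ∧ #σ.support = 2 * j := by
  rw [← sum_cycleType]
  constructor
  · intro h
    refine ⟨pow_prime_eq_one_iff.2 fun c hc => ?_, by simp [h, mul_comm]⟩
    rw [h] at hc
    exact Multiset.eq_of_mem_replicate hc
  · rintro ⟨hσ, hsum⟩
    rw [cycleType_of_pow_prime_eq_one hσ] at hsum ⊢
    simp only [Multiset.sum_replicate, smul_eq_mul] at hsum
    congr 1
    omega

def IsBesselPartition {α : Type*} (P : Finset (Finset α)) : Prop :=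
  (∀ b ∈ P, #b = 1 ∨ #b = 2) ∧ ∀ x, ∃! b, b ∈ P ∧ x ∈ b

section BesselPartition

variable {α : Type*} [DecidableEq α]

namespace IsBesselPartition

variable {P : Finset (Finset α)}

theorem sum_card [Fintype α] (hP : IsBesselPartition P) : ∑ b ∈ P, #b = Fintype.card α := by
  rw [← card_biUnion, ← Finset.card_univ]
  · congr
    ext x
    obtain ⟨b, ⟨hb, hx⟩, -⟩ := hP.2 x
    simpa using ⟨b, hb, hx⟩
  · intro b hb c hc hbc
    refine disjoint_left.2 fun x hxb hxc => hbc ?_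
    exact (hP.2 x).unique ⟨hb, hxb⟩ ⟨hc, hxc⟩

theorem two_mul_card [Fintype α] (hP : IsBesselPartition P) :
    2 * #P = Fintype.card α + #{b ∈ P | #b = 1} := by
  rw [← hP.sum_card, card_filter, ← sum_add_distrib, mul_comm, ← smul_eq_mul, ← sum_const]
  refine sum_congr rfl fun b hb => ?_
  rcases hP.1 b hb with h | h <;> simp [h]

theorem card_le [Fintype α] (hP : IsBesselPartition P) : #P ≤ Fintype.card α := by
  have := hP.two_mul_card
  have := card_filter_le P (fun b => #b = 1)
  omega

theorem card_le_two_mul_card [Fintype α] (hP : IsBesselPartition P) :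
    Fintype.card α ≤ 2 * #P := by
  rw [hP.two_mul_card]
  exact Nat.le_add_right _ _

theorem existsUnique_pair_mem (hP : IsBesselPartition P) (x : α) : ∃! y, {x, y} ∈ P := by
  obtain ⟨b, ⟨hb, hx⟩, hbu⟩ := hP.2 x
  refine existsUnique_of_exists_of_unique ?_ fun y z hy hz => ?_
  · rcases hP.1 b hb with h | h
    · obtain ⟨a, rfl⟩ := card_eq_one.1 h
      obtain rfl := mem_singleton.1 hx
      exact ⟨x, by simpa using hb⟩
    · obtain ⟨a, c, -, rfl⟩ := card_eq_two.1 h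
      rcases mem_insert.1 hx with rfl | hx
      · exact ⟨c, hb⟩
      · obtain rfl := mem_singleton.1 hx
        exact ⟨a, pair_comm a x ▸ hb⟩
  · exact eq_of_pair_eq_pair_left <|
      (hbu _ ⟨hy, mem_insert_self x _⟩).trans (hbu _ ⟨hz, mem_insert_self x _⟩).symm

end IsBesselPartition

variable [Fintype α]

def pairPartition (σ : Perm α) : Finset (Finset α) :=
  univ.image fun x => {x, σ x}

variable {σ τ : Perm α}

theorem pair_mem_pairPartition_iff (hσ : σ ^ 2 = 1) {x y : α} :
    {x, y} ∈ pairPartition σ ↔ y = σ x := by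
  refine ⟨fun h => ?_, fun h => mem_image.2 ⟨x, mem_univ _, h ▸ rfl⟩⟩
  obtain ⟨z, -, hz⟩ := mem_image.1 h
  rcases mem_insert.1 (hz ▸ mem_insert_self x _ : x ∈ ({z, σ z} : Finset α)) with rfl | hx
  · exact (eq_of_pair_eq_pair_left hz).symm
  · obtain rfl := mem_singleton.1 hx
    rw [pair_comm] at hz
    rw [σ.apply_apply_of_sq_eq_one hσ]
    exact (eq_of_pair_eq_pair_left hz).symm

theorem isBesselPartition_pairPartition (hσ : σ ^ 2 = 1) :
    IsBesselPartition (pairPartition σ) := by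
  refine ⟨fun b hb => ?_, fun x => ⟨{x, σ x}, ⟨mem_image_of_mem _ (mem_univ x), by simp⟩, ?_⟩⟩
  · obtain ⟨x, -, rfl⟩ := mem_image.1 hb
    by_cases h : σ x = x
    · simp [h]
    · simp [card_pair (Ne.symm h)]
  · rintro b ⟨hb, hxb⟩
    obtain ⟨z, -, rfl⟩ := mem_image.1 hb
    rcases mem_insert.1 hxb with rfl | hx
    · rfl
    · obtain rfl := mem_singleton.1 hx
      rw [σ.apply_apply_of_sq_eq_one hσ, pair_comm]

theorem pairPartition_injective (hτ : τ ^ 2 = 1) (h : pairPartition σ = pairPartition τ) :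
    σ = τ := by
  ext x
  have : {x, σ x} ∈ pairPartition τ := h ▸ mem_image_of_mem _ (mem_univ x)
  rw [(pair_mem_pairPartition_iff hτ).1 this]

theorem exists_pairPartition_eq {P : Finset (Finset α)} (hP : IsBesselPartition P) :
    ∃ σ : Perm α, σ ^ 2 = 1 ∧ pairPartition σ = P := by
  choose f hf hfu using hP.existsUnique_pair_mem
  have hff : Function.Involutive f :=
    fun x => (hfu _ _ (by simpa only [pair_comm] using hf x)).symm
  refine ⟨hff.toPerm f, ?_, ?_⟩
  · ext x
    simp [sq, hff x]
  · ext b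
    refine ⟨fun hb => ?_, fun hb => ?_⟩
    · obtain ⟨x, -, rfl⟩ := mem_image.1 hb
      exact hf x
    · obtain ⟨x, hx⟩ : b.Nonempty := card_pos.1 (by rcases hP.1 b hb with h | h <;> omega)
      have := (hP.2 x).unique ⟨hb, hx⟩ ⟨hf x, mem_insert_self x _⟩
      exact this ▸ mem_image_of_mem _ (mem_univ x)

theorem card_filter_card_eq_one_pairPartition_add_card_support :
    #{b ∈ pairPartition σ | #b = 1} + #σ.support = Fintype.card α := by
  have : {b ∈ pairPartition σ | #b = 1} = σ.supportᶜ.map ⟨({·}), singleton_injective⟩ := by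
    ext b
    simp only [pairPartition, mem_filter, mem_image, mem_univ, true_and, mem_map, mem_compl,
      Perm.mem_support, not_not, Function.Embedding.coeFn_mk]
    constructor
    · rintro ⟨⟨x, rfl⟩, h⟩
      have hx : σ x = x := by
        by_contra hne
        simp [card_pair (Ne.symm hne)] at h
      exact ⟨x, hx, by simp [hx]⟩
    · rintro ⟨x, hx, rfl⟩
      exact ⟨⟨x, by simp [hx]⟩, card_singleton x⟩
  rw [this, card_map, card_compl_add_card]

theorem card_support_add_two_mul_card_pairPartition (hσ : σ ^ 2 = 1) :
    #σ.support + 2 * #(pairPartition σ) = 2 * Fintype.card α := by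
  have := (isBesselPartition_pairPartition hσ).two_mul_card
  have := card_filter_card_eq_one_pairPartition_add_card_support (σ := σ)
  omega

theorem natCard_isBesselPartition {j k : ℕ} (hjk : j + k = Fintype.card α) :
    Nat.card {P : Finset (Finset α) // IsBesselPartition P ∧ #P = k} =
      #({σ | σ.cycleType = Multiset.replicate j 2} : Finset (Perm α)) := by
  have hsq (σ : {σ : Perm α // σ.cycleType = .replicate j 2}) : σ.1 ^ 2 = 1 :=
    (Perm.cycleType_eq_replicate_two_iff.1 σ.2).1
  have hcard (σ : {σ : Perm α // σ.cycleType = .replicate j 2}) : #(pairPartition σ.1) = k := by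
    have := Perm.cycleType_eq_replicate_two_iff.1 σ.2
    have := card_support_add_two_mul_card_pairPartition (hsq σ)
    omega
  rw [← Fintype.card_subtype, ← Nat.card_eq_fintype_card]
  refine (Nat.card_congr (Equiv.ofBijective
    (fun σ => ⟨pairPartition σ.1, isBesselPartition_pairPartition (hsq σ), hcard σ⟩)
    ⟨fun σ τ h => Subtype.ext (pairPartition_injective (hsq τ) (congrArg Subtype.val h)), ?_⟩)).symm
  rintro ⟨P, hP, rfl⟩
  obtain ⟨σ, hσ, rfl⟩ := exists_pairPartition_eq hP
  have := card_support_add_two_mul_card_pairPartition hσ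
  exact ⟨⟨σ, Perm.cycleType_eq_replicate_two_iff.2 ⟨hσ, by omega⟩⟩, rfl⟩

end BesselPartition

theorem besselB_mul_factorial {n k j r : ℕ} (hn : n = 2 * j + r) (hk : k = j + r) :
    besselB n k * (r ! * 2 ^ j * j !) = n ! := by
  have hB : besselB n k = Nat.card {P : Finset (Finset (Fin n)) // IsBesselPartition P ∧ #P = k} :=
    Nat.card_congr (Equiv.subtypeEquivRight fun P => and_assoc.symm)
  rw [hB, natCard_isBesselPartition (j := j) (by rw [Fintype.card_fin]; omega)]
  have := Perm.card_of_cycleType_mul_eq (α := Fin n) (Multiset.replicate j 2)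
  subst hn
  rcases eq_or_ne j 0 with rfl | hj
  · simpa using this
  · simpa [hj, Multiset.mem_replicate, mul_comm j 2] using this

theorem besselB_eq_zero {n k : ℕ} (h : 2 * k < n ∨ n < k) : besselB n k = 0 := by
  refine @Nat.card_of_isEmpty _ ⟨fun ⟨P, hb, hu, hk⟩ => ?_⟩
  have hP : IsBesselPartition P := ⟨hb, hu⟩
  have := hP.card_le
  have := hP.card_le_two_mul_card
  simp only [Fintype.card_fin] at *
  omega

theorem Nat.mul_le_sq_of_mul_eq {a b c d₁ d₂ d₃ N : ℕ} (h₁ : a * d₁ = N) (h₂ : b * d₂ = N)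
    (h₃ : c * d₃ = N) (hd : d₂ ^ 2 ≤ d₁ * d₃) (hd₂ : 0 < d₂) : a * c ≤ b ^ 2 := by
  refine Nat.le_of_mul_le_mul_right ?_ (pow_pos hd₂ 2)
  calc a * c * d₂ ^ 2 ≤ a * c * (d₁ * d₃) := Nat.mul_le_mul_left _ hd
    _ = (a * d₁) * (c * d₃) := by ring
    _ = (b * d₂) ^ 2 := by rw [h₁, h₃, h₂, sq]
    _ = b ^ 2 * d₂ ^ 2 := mul_pow b d₂ 2

theorem Nat.factorial_add_two_sq_le (r : ℕ) : (r + 2)! ^ 2 ≤ r ! * (r + 4)! := by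
  calc (r + 2)! ^ 2 = r ! * ((r + 2) * (r + 1) * (r + 2)!) := by
        rw [sq, factorial_succ, factorial_succ]; ring
    _ ≤ r ! * ((r + 4) * (r + 3) * (r + 2)!) := by gcongr <;> omega
    _ = r ! * (r + 4)! := by rw [factorial_succ (r + 3), factorial_succ (r + 2)]; ring

theorem Nat.factorial_succ_sq_le (j : ℕ) : (j + 1)! ^ 2 ≤ j ! * (j + 2)! := by
  calc (j + 1)! ^ 2 = j ! * ((j + 1) * (j + 1)!) := by rw [sq, factorial_succ j]; ring
    _ ≤ j ! * ((j + 2) * (j + 1)!) := by gcongr; omega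
    _ = j ! * (j + 2)! := by rw [factorial_succ (j + 1)]

theorem factorial_mul_two_pow_mul_factorial_sq_le (j r : ℕ) :
    ((r + 2)! * 2 ^ (j + 1) * (j + 1)!) ^ 2 ≤
      (r ! * 2 ^ (j + 2) * (j + 2)!) * ((r + 4)! * 2 ^ j * j !) := by
  calc ((r + 2)! * 2 ^ (j + 1) * (j + 1)!) ^ 2
      = (r + 2)! ^ 2 * (2 ^ (j + 2) * 2 ^ j) * (j + 1)! ^ 2 := by ring
    _ ≤ (r ! * (r + 4)!) * (2 ^ (j + 2) * 2 ^ j) * (j ! * (j + 2)!) := by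
        gcongr
        exacts [Nat.factorial_add_two_sq_le r, Nat.factorial_succ_sq_le j]
    _ = (r ! * 2 ^ (j + 2) * (j + 2)!) * ((r + 4)! * 2 ^ j * j !) := by ring

theorem stmt_9_general (n k : ℕ) :
    besselB n (k - 1) * besselB n (k + 1) ≤ besselB n k ^ 2 := by
  by_cases h : n ≤ 2 * (k - 1) ∧ k + 1 ≤ n
  · -- partitions into `k - 1`, `k`, `k + 1` blocks have `j + 2`, `j + 1`, `j` pairs
    -- and `r`, `r + 2`, `r + 4` singletons
    obtain ⟨j, r, hn, hk⟩ : ∃ j r, n = 2 * j + r + 4 ∧ k = j + r + 3 :=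
      ⟨n - k - 1, 2 * k - n - 2, by omega, by omega⟩
    exact Nat.mul_le_sq_of_mul_eq
      (besselB_mul_factorial (j := j + 2) (r := r) (by omega) (by omega))
      (besselB_mul_factorial (j := j + 1) (r := r + 2) (by omega) (by omega))
      (besselB_mul_factorial (j := j) (r := r + 4) (by omega) (by omega))
      (factorial_mul_two_pow_mul_factorial_sq_le j r) (by positivity)
  · rcases not_and_or.1 h with h | h
    · rw [besselB_eq_zero (k := k - 1) (by omega), zero_mul]
      exact Nat.zero_le _
    · rw [besselB_eq_zero (k := k + 1) (by omega), mul_zero]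
      exact Nat.zero_le _

/-- The Bessel numbers of the second kind form a log-concave sequence in `k`. -/
theorem stmt_9 (n k : ℕ) (hk : 1 ≤ k) :
    besselB n (k - 1) * besselB n (k + 1) ≤ besselB n k ^ 2 :=
  stmt_9_general n k
end

section
/- For all n ≥ 0 and k ≥ 1, the matching numbers of the complete graph satisfy m(n,k-1) · m(n,k+1) ≤ m(n,k)², i.e., the sequence {m(n,k)}_{k≥0} is log-concave. -/
/-- A matching in the complete graph `K_m` on vertex set `Fin m`. -/
def IsMatching {m : ℕ} (M : Finset (Finset (Fin m))) : Prop :=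
  (∀ e ∈ M, e.card = 2) ∧ ∀ e ∈ M, ∀ f ∈ M, e ≠ f → Disjoint e f

/-- `matchNum m k` is the number of `k`-matchings in the complete graph `K_m`. -/
noncomputable def matchNum (m k : ℕ) : ℕ :=
  Nat.card {M : Finset (Finset (Fin m)) // IsMatching M ∧ M.card = k}

/-!
Counting pairs (a `(k+1)`-matching, one of its edges) in two ways — deleting the edge leaves a
`k`-matching together with a pair of vertices it does not cover — gives
`(k + 1) m(n, k+1) = m(n, k) · C(n - 2k, 2)`. The ratio `m(n, k+1) / m(n, k) = C(n - 2k, 2) / (k + 1)`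
is therefore decreasing in `k`, which is log-concavity.
-/

theorem mul_le_sq_of_succ_mul_eq_mul_antitone {a c : ℕ → ℕ} (hc : Antitone c)
    (h : ∀ k, (k + 1) * a (k + 1) = a k * c k) (k : ℕ) :
    a k * a (k + 2) ≤ a (k + 1) ^ 2 := by
  refine Nat.le_of_mul_le_mul_left ?_ (by positivity : 0 < (k + 1) * (k + 2))
  calc (k + 1) * (k + 2) * (a k * a (k + 2))
      = (k + 1) * a k * ((k + 2) * a (k + 2)) := by ring
    _ = (k + 1) * a k * (a (k + 1) * c (k + 1)) := by rw [h (k + 1)]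
    _ ≤ (k + 2) * a k * (a (k + 1) * c k) := by
        gcongr
        · omega
        · exact hc k.le_succ
    _ = (k + 2) * a (k + 1) * (a k * c k) := by ring
    _ = (k + 1) * (k + 2) * a (k + 1) ^ 2 := by rw [← h k]; ring

namespace IsMatching

variable {m : ℕ} {M : Finset (Finset (Fin m))} {e : Finset (Fin m)}

theorem mono (h : IsMatching M) {N : Finset (Finset (Fin m))} (hNM : N ⊆ M) : IsMatching N :=
  ⟨fun e he => h.1 e (hNM he), fun e he f hf => h.2 e (hNM he) f (hNM hf)⟩

theorem card_sup (h : IsMatching M) : (M.sup id).card = 2 * M.card := by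
  rw [Finset.sup_eq_biUnion, Finset.card_biUnion (t := id) fun e he f hf => h.2 e he f hf]
  simp only [id_eq]
  rw [Finset.sum_congr rfl h.1, Finset.sum_const, smul_eq_mul, mul_comm]

theorem disjoint_sup_erase (h : IsMatching M) (he : e ∈ M) : Disjoint e ((M.erase e).sup id) :=
  Finset.disjoint_sup_right.2 fun f hf => h.2 e he f (Finset.mem_of_mem_erase hf)
    (Finset.ne_of_mem_erase hf).symm

theorem insert (h : IsMatching M) (he : e.card = 2) (hd : Disjoint e (M.sup id)) :
    IsMatching (insert e M) := by
  have hdisj : ∀ f ∈ M, Disjoint e f := Finset.disjoint_sup_right.1 hd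
  refine ⟨fun f hf => ?_, fun f hf g hg hfg => ?_⟩
  · rcases Finset.mem_insert.1 hf with rfl | hf
    exacts [he, h.1 f hf]
  · rcases Finset.mem_insert.1 hf with rfl | hfM <;> rcases Finset.mem_insert.1 hg with rfl | hgM
    exacts [absurd rfl hfg, hdisj g hgM, (hdisj f hfM).symm, h.2 f hfM g hgM hfg]

end IsMatching

theorem Finset.notMem_of_disjoint_sup {α : Type*} [DecidableEq α] {s : Finset (Finset α)}
    {e : Finset α} (he : e.Nonempty) (hd : Disjoint e (s.sup id)) : e ∉ s :=
  fun hs => he.ne_empty (disjoint_self.1 (hd.mono_right (Finset.le_sup (f := id) hs)))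

open Classical in
noncomputable def matchSet (n k : ℕ) : Finset (Finset (Finset (Fin n))) :=
  {M | IsMatching M ∧ M.card = k}

theorem mem_matchSet {n k : ℕ} {M : Finset (Finset (Fin n))} :
    M ∈ matchSet n k ↔ IsMatching M ∧ M.card = k := by
  classical
  simp [matchSet]

theorem matchNum_eq_card_matchSet (n k : ℕ) : matchNum n k = (matchSet n k).card := by
  classical
  rw [matchNum, matchSet, Nat.card_eq_fintype_card, Fintype.card_subtype]

theorem succ_mul_card_matchSet_succ (n k : ℕ) :
    (k + 1) * (matchSet n (k + 1)).card = (matchSet n k).card * (n - 2 * k).choose 2 := by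
  set rooted := (matchSet n (k + 1)).sigma fun M => M
  set extended := (matchSet n k).sigma fun M => ((M.sup id)ᶜ).powersetCard 2
  have card_rooted : rooted.card = (k + 1) * (matchSet n (k + 1)).card := by
    rw [Finset.card_sigma, Finset.sum_congr rfl fun M hM => (mem_matchSet.1 hM).2,
      Finset.sum_const, smul_eq_mul, mul_comm]
  have card_extended : extended.card = (matchSet n k).card * (n - 2 * k).choose 2 := by
    rw [Finset.card_sigma, Finset.sum_congr rfl fun M hM => ?_, Finset.sum_const, smul_eq_mul]
    obtain ⟨hM, hcard⟩ := mem_matchSet.1 hM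
    rw [Finset.card_powersetCard, Finset.card_compl, Fintype.card_fin, hM.card_sup, hcard]
  have mem_extended : ∀ q ∈ extended,
      IsMatching q.1 ∧ q.1.card = k ∧ q.2.card = 2 ∧ Disjoint q.2 (q.1.sup id) ∧ q.2 ∉ q.1 := by
    rintro ⟨M, e⟩ hq
    obtain ⟨hM, he⟩ := Finset.mem_sigma.1 hq
    obtain ⟨hsub, he2⟩ := Finset.mem_powersetCard.1 he
    have hd := Finset.subset_compl_iff_disjoint_right.1 hsub
    exact ⟨(mem_matchSet.1 hM).1, (mem_matchSet.1 hM).2, he2, hd,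
      Finset.notMem_of_disjoint_sup (Finset.card_pos.1 (by omega)) hd⟩
  rw [← card_rooted, ← card_extended]
  refine Finset.card_bij' (fun p _ => ⟨p.1.erase p.2, p.2⟩) (fun q _ => ⟨insert q.2 q.1, q.2⟩)
    ?_ ?_ ?_ ?_
  · rintro ⟨M, e⟩ hp
    obtain ⟨hM, he⟩ := Finset.mem_sigma.1 hp
    obtain ⟨hmatch, hcard⟩ := mem_matchSet.1 hM
    refine Finset.mem_sigma.2 ⟨mem_matchSet.2 ⟨hmatch.mono (Finset.erase_subset _ _), ?_⟩,
      Finset.mem_powersetCard.2 ⟨?_, hmatch.1 e he⟩⟩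
    · rw [Finset.card_erase_of_mem he, hcard, Nat.add_sub_cancel]
    · exact Finset.subset_compl_iff_disjoint_right.2 (hmatch.disjoint_sup_erase he)
  · rintro ⟨M, e⟩ hq
    obtain ⟨hmatch, hcard, he2, hd, heM⟩ := mem_extended _ hq
    refine Finset.mem_sigma.2 ⟨mem_matchSet.2 ⟨hmatch.insert he2 hd, ?_⟩, Finset.mem_insert_self e M⟩
    rw [Finset.card_insert_of_notMem heM, hcard]
  · rintro ⟨M, e⟩ hp
    simp [Finset.insert_erase (Finset.mem_sigma.1 hp).2]
  · rintro ⟨M, e⟩ hq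
    simp [Finset.erase_insert (mem_extended _ hq).2.2.2.2]

theorem succ_mul_matchNum_succ (n k : ℕ) :
    (k + 1) * matchNum n (k + 1) = matchNum n k * (n - 2 * k).choose 2 := by
  simpa only [matchNum_eq_card_matchSet] using succ_mul_card_matchSet_succ n k

/-- The matching numbers of the complete graph form a log-concave sequence in `k`. -/
theorem stmt_10 (n k : ℕ) (hk : 1 ≤ k) :
    matchNum n (k - 1) * matchNum n (k + 1) ≤ matchNum n k ^ 2 := by
  obtain ⟨j, rfl⟩ := Nat.exists_eq_add_of_le' hk
  simpa using mul_le_sq_of_succ_mul_eq_mul_antitone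
    (fun _ _ hij => Nat.choose_le_choose 2 (by omega)) (succ_mul_matchNum_succ n) j
end

section
/- For all n ≥ 1 and 2 ≤ k ≤ n-1, the signless Bessel numbers of the first kind satisfy a(n,k-1) · a(n,k+1) ≤ a(n,k)², i.e., the sequence {a(n,k)}_{1≤k≤n} is log-concave. -/
-- Writing `n = k + r + 1` keeps the truncated subtractions in `aQ` out of the statement.
theorem aQ_succ_mul (k r : ℕ) (hk : 1 ≤ k) :
    ((k + 2 * r + 1) * k : ℚ) * aQ (k + r + 1) (k + 1) = 2 * (r + 1) * aQ (k + r + 1) k := by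
  obtain ⟨i, rfl⟩ : ∃ i, k = i + 1 := ⟨k - 1, by omega⟩
  simp only [aQ, show 2 * (i + 1 + r + 1) - (i + 1 + 1) - 1 = i + 2 * r + 1 by omega,
    show 2 * (i + 1 + r + 1) - (i + 1) - 1 = i + 2 * r + 2 by omega,
    show i + 1 + r + 1 - (i + 1 + 1) = r by omega, show i + 1 + r + 1 - (i + 1) = r + 1 by omega,
    show i + 1 + 1 - 1 = i + 1 by omega, show i + 1 - 1 = i by omega,
    Nat.factorial_succ, pow_succ]
  push_cast
  field_simp
  ring

theorem mul_le_sq_of_ratios {K : Type*} [Field K] [LinearOrder K] [IsStrictOrderedRing K]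
    {a b c d x y z : K} (hb : 0 < b) (hc : 0 < c) (had : a * d ≤ b * c)
    (hxy : a * y = b * x) (hyz : c * z = d * y) : x * z ≤ y ^ 2 := by
  have key : b * c * (x * z) = a * d * y ^ 2 := by
    linear_combination (c * z) * hxy.symm + (a * y) * hyz
  refine le_of_mul_le_mul_left ?_ (mul_pos hb hc)
  rw [key]
  exact mul_le_mul_of_nonneg_right had (sq_nonneg y)

theorem stmt_11_general (n k : ℕ) (hk2 : 2 ≤ k) (hkn : k ≤ n - 1) :
    aQ n (k - 1) * aQ n (k + 1) ≤ aQ n k ^ 2 := by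
  obtain ⟨j, rfl⟩ : ∃ j, k = j + 2 := ⟨k - 2, by omega⟩
  obtain ⟨m, rfl⟩ : ∃ m, n = j + m + 3 := ⟨n - j - 3, by omega⟩
  have hlow := aQ_succ_mul (j + 1) (m + 1) (by omega)
  have hhigh := aQ_succ_mul (j + 2) m (by omega)
  rw [show j + 1 + (m + 1) + 1 = j + m + 3 by omega] at hlow
  rw [show j + 2 + m + 1 = j + m + 3 by omega] at hhigh
  refine mul_le_sq_of_ratios (by positivity) (by positivity) ?_ hlow hhigh
  push_cast
  nlinarith [sq_nonneg (m : ℚ), sq_nonneg (j : ℚ)]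

/-- The signless Bessel numbers of the first kind form a log-concave sequence in `k`. -/
theorem stmt_11 (n k : ℕ) (hn : 1 ≤ n) (hk2 : 2 ≤ k) (hkn : k ≤ n - 1) :
    aQ n (k - 1) * aQ n (k + 1) ≤ aQ n k ^ 2 :=
  stmt_11_general n k hk2 hkn
end

section
/- For all n ≥ 1 and k ≥ 0, m(n-1,k) · m(n+1,k) ≤ m(n,k)², where m(n,k) is the number of k-matchings in K_n. That is, the matching numbers of complete graphs are log-concave in the first coordinate. -/
open Finset

lemma natCard_subtype {α : Type*} [Fintype α] (p : α → Prop) [DecidablePred p] :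
    Nat.card {x // p x} = (Finset.univ.filter p).card := by
  rw [Nat.card_eq_fintype_card, Fintype.card_subtype]

lemma isMatching_subset {m : ℕ} {M N : Finset (Finset (Fin m))} (h : N ⊆ M)
    (hM : IsMatching M) : IsMatching N :=
  ⟨fun e he => hM.1 e (h he), fun e he f hf => hM.2 e (h he) f (h hf)⟩

section EdgeMap

variable {a b : ℕ} {f : Fin a → Fin b}

/-- Map a set of edges through a vertex map. -/
def edgeMap (f : Fin a → Fin b) (M : Finset (Finset (Fin a))) : Finset (Finset (Fin b)) :=
  M.image fun e => e.image f

lemma edgeMap_injective (hf : Function.Injective f) :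
    Function.Injective (edgeMap f) :=
  Finset.image_injective (Finset.image_injective hf)

lemma card_edgeMap (hf : Function.Injective f) (M : Finset (Finset (Fin a))) :
    (edgeMap f M).card = M.card :=
  Finset.card_image_of_injective _ (Finset.image_injective hf)

lemma isMatching_edgeMap (hf : Function.Injective f) {M : Finset (Finset (Fin a))}
    (hM : IsMatching M) : IsMatching (edgeMap f M) := by
  constructor
  · intro e he
    obtain ⟨e₀, he₀, rfl⟩ := Finset.mem_image.1 he
    rw [Finset.card_image_of_injective _ hf]
    exact hM.1 e₀ he₀
  · intro e he g hg hne
    obtain ⟨e₀, he₀, rfl⟩ := Finset.mem_image.1 he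
    obtain ⟨g₀, hg₀, rfl⟩ := Finset.mem_image.1 hg
    have hne₀ : e₀ ≠ g₀ := fun h => hne (by rw [h])
    exact (Finset.disjoint_image hf).2 (hM.2 e₀ he₀ g₀ hg₀ hne₀)

lemma mem_range_of_mem_edgeMap {M : Finset (Finset (Fin a))} {e : Finset (Fin b)}
    (he : e ∈ edgeMap f M) {x : Fin b} (hx : x ∈ e) : x ∈ Set.range f := by
  obtain ⟨e₀, _, rfl⟩ := Finset.mem_image.1 he
  obtain ⟨y, _, rfl⟩ := Finset.mem_image.1 hx
  exact ⟨y, rfl⟩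

/-- Pull back a set of edges through an injective vertex map. -/
noncomputable def edgeComap (hf : Function.Injective f) (M : Finset (Finset (Fin b))) :
    Finset (Finset (Fin a)) :=
  M.image fun e => e.preimage f hf.injOn

lemma image_preimage_of_subset (hf : Function.Injective f) (e : Finset (Fin b))
    (he : ∀ x ∈ e, x ∈ Set.range f) : (e.preimage f hf.injOn).image f = e := by
  classical
  rw [Finset.image_preimage]
  exact Finset.filter_true_of_mem he

lemma edgeMap_edgeComap (hf : Function.Injective f) {M : Finset (Finset (Fin b))}
    (hM : ∀ e ∈ M, ∀ x ∈ e, x ∈ Set.range f) : edgeMap f (edgeComap hf M) = M := by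
  rw [edgeComap, edgeMap, Finset.image_image]
  refine (Finset.image_congr ?_).trans Finset.image_id
  intro e he
  exact image_preimage_of_subset hf e (hM e he)

lemma card_edgeComap (hf : Function.Injective f) {M : Finset (Finset (Fin b))}
    (hM : ∀ e ∈ M, ∀ x ∈ e, x ∈ Set.range f) : (edgeComap hf M).card = M.card := by
  conv_rhs => rw [← edgeMap_edgeComap hf hM]
  rw [card_edgeMap hf]

lemma isMatching_edgeComap (hf : Function.Injective f) {M : Finset (Finset (Fin b))}
    (hM : IsMatching M) (hR : ∀ e ∈ M, ∀ x ∈ e, x ∈ Set.range f) :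
    IsMatching (edgeComap hf M) := by
  constructor
  · intro e he
    obtain ⟨e₀, he₀, rfl⟩ := Finset.mem_image.1 he
    have : ((e₀.preimage f hf.injOn).image f).card = e₀.card := by
      rw [image_preimage_of_subset hf e₀ (hR e₀ he₀)]
    rw [Finset.card_image_of_injective _ hf] at this
    rw [this]; exact hM.1 e₀ he₀
  · intro e he g hg hne
    obtain ⟨e₀, he₀, rfl⟩ := Finset.mem_image.1 he
    obtain ⟨g₀, hg₀, rfl⟩ := Finset.mem_image.1 hg
    have hne₀ : e₀ ≠ g₀ := fun h => hne (by rw [h])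
    have hd := hM.2 e₀ he₀ g₀ hg₀ hne₀
    rw [Finset.disjoint_left] at hd ⊢
    intro x hx hx'
    exact hd (Finset.mem_preimage.1 hx) (Finset.mem_preimage.1 hx')

end EdgeMap

lemma matchNum_zero (m : ℕ) : matchNum m 0 = 1 := by
  rw [matchNum, Nat.card_eq_one_iff_unique]
  constructor
  · constructor
    rintro ⟨M, -, hM⟩ ⟨N, -, hN⟩
    simp only [Finset.card_eq_zero] at hM hN
    subst hM hN; rfl
  · exact ⟨⟨∅, ⟨by simp [IsMatching], rfl⟩⟩⟩

lemma matchNum_small (m k : ℕ) (h : m < 2) : matchNum m (k + 1) = 0 := by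
  rw [matchNum, Nat.card_eq_zero]
  left
  constructor
  rintro ⟨M, ⟨hm, hc⟩⟩
  have hpos : 0 < M.card := by omega
  obtain ⟨e, he⟩ := Finset.card_pos.1 hpos
  have h2 := hm.1 e he
  have := Finset.card_le_univ e
  simp only [Finset.card_univ, Fintype.card_fin] at this
  omega

lemma matchNum_recur (m k : ℕ) :
    matchNum (m + 2) (k + 1) = matchNum (m + 1) (k + 1) + (m + 1) * matchNum m k := by
  classical
  set v : Fin (m + 2) := Fin.last (m + 1) with hv
  rw [matchNum, matchNum, matchNum, natCard_subtype, natCard_subtype, natCard_subtype]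
  set A : Finset (Finset (Finset (Fin (m + 2)))) :=
    univ.filter (fun M => IsMatching M ∧ M.card = k + 1) with hA
  set Q : Finset (Finset (Fin (m + 2))) → Prop := fun M => ∀ e ∈ M, v ∉ e with hQ
  have hsplit : (A.filter Q).card + (A.filter fun M => ¬ Q M).card = A.card :=
    Finset.card_filter_add_card_filter_not Q
  -- the injections
  have hcs : Function.Injective (Fin.castSucc : Fin (m + 1) → Fin (m + 2)) :=
    Fin.castSucc_injective _
  set f : Fin (m + 1) → Fin m → Fin (m + 2) :=
    fun j x => Fin.castSucc (Fin.succAbove j x) with hf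
  have hfj : ∀ j, Function.Injective (f j) := fun j x y h =>
    Fin.succAbove_right_injective (hcs h)
  have hf_ne_last : ∀ j x, f j x ≠ v := fun j x => (Fin.castSucc_lt_last _).ne
  have hf_ne_cs : ∀ j x, f j x ≠ Fin.castSucc j := fun j x h =>
    Fin.succAbove_ne j x (hcs h)
  set e₀ : Fin (m + 1) → Finset (Fin (m + 2)) := fun j => {Fin.castSucc j, v} with he₀
  have hcsv : ∀ j : Fin (m + 1), Fin.castSucc j ≠ v := fun j => (Fin.castSucc_lt_last j).ne
  have hve₀ : ∀ j, v ∈ e₀ j := fun j => by simp [he₀]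
  have he₀_not_mem : ∀ (j j' : Fin (m + 1)) (M : Finset (Finset (Fin m))),
      e₀ j ∉ edgeMap (f j') M := by
    intro j j' M h
    obtain ⟨x, hx⟩ := mem_range_of_mem_edgeMap h (hve₀ j)
    exact hf_ne_last j' x hx
  -- Part 1 : uncovered vertex v
  have h₁ : (univ.filter (fun M : Finset (Finset (Fin (m + 1))) =>
      IsMatching M ∧ M.card = k + 1)).card = (A.filter Q).card := by
    refine Finset.card_bij (fun M _ => edgeMap Fin.castSucc M) ?_ ?_ ?_
    · intro M hM
      simp only [mem_filter, mem_univ, true_and] at hM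
      simp only [hA, hQ, mem_filter, mem_univ, true_and]
      refine ⟨⟨isMatching_edgeMap hcs hM.1, by rw [card_edgeMap hcs, hM.2]⟩, ?_⟩
      intro e he hve
      obtain ⟨x, hx⟩ := mem_range_of_mem_edgeMap he hve
      exact hcsv x hx
    · intro M₁ h₁ M₂ h₂ h
      exact edgeMap_injective hcs h
    · intro M hM
      simp only [hA, hQ, mem_filter, mem_univ, true_and] at hM
      obtain ⟨⟨hmat, hcard⟩, hQM⟩ := hM
      have hR : ∀ e ∈ M, ∀ x ∈ e, x ∈ Set.range (Fin.castSucc : Fin (m + 1) → Fin (m + 2)) := by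
        intro e he x hx
        exact Fin.exists_castSucc_eq.2 (fun h => hQM e he (by rw [hv, ← h]; exact hx))
      refine ⟨edgeComap hcs M, ?_, edgeMap_edgeComap hcs hR⟩
      simp only [mem_filter, mem_univ, true_and]
      exact ⟨isMatching_edgeComap hcs hmat hR, by rw [card_edgeComap hcs hR, hcard]⟩
  -- Part 2 : v covered
  have h₂ : (((univ : Finset (Fin (m + 1))) ×ˢ univ.filter
      (fun M : Finset (Finset (Fin m)) => IsMatching M ∧ M.card = k)).card)
      = (A.filter fun M => ¬ Q M).card := by
    refine Finset.card_bij
      (fun p _ => insert (e₀ p.1) (edgeMap (f p.1) p.2)) ?_ ?_ ?_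
    · rintro ⟨j, M⟩ hp
      simp only [mem_product, mem_filter, mem_univ, true_and] at hp
      obtain ⟨hmat, hcard⟩ := hp
      have hdisj : ∀ e ∈ edgeMap (f j) M, Disjoint (e₀ j) e := by
        intro e he
        rw [Finset.disjoint_left]
        intro x hx hx'
        obtain ⟨y, hy⟩ := mem_range_of_mem_edgeMap he hx'
        simp only [he₀, Finset.mem_insert, Finset.mem_singleton] at hx
        rcases hx with rfl | rfl
        · exact hf_ne_cs j y hy
        · exact hf_ne_last j y hy
      simp only [hA, hQ, mem_filter, mem_univ, true_and]
      refine ⟨⟨⟨?_, ?_⟩, ?_⟩, ?_⟩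
      · intro e he
        rcases Finset.mem_insert.1 he with rfl | he'
        · exact Finset.card_pair (hcsv j)
        · exact (isMatching_edgeMap (hfj j) hmat).1 e he'
      · intro e he g hg hne
        rcases Finset.mem_insert.1 he with rfl | he' <;>
          rcases Finset.mem_insert.1 hg with rfl | hg'
        · exact absurd rfl hne
        · exact hdisj g hg'
        · exact (hdisj e he').symm
        · exact (isMatching_edgeMap (hfj j) hmat).2 e he' g hg' hne
      · rw [Finset.card_insert_of_notMem (he₀_not_mem j j M), card_edgeMap (hfj j), hcard]
      · intro h
        exact h (e₀ j) (Finset.mem_insert_self _ _) (hve₀ j)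
    · rintro ⟨j₁, M₁⟩ h₁ ⟨j₂, M₂⟩ h₂ heq
      simp only at heq
      have he₀mem : e₀ j₁ ∈ insert (e₀ j₂) (edgeMap (f j₂) M₂) := heq ▸ mem_insert_self _ _
      have he₀eq : e₀ j₁ = e₀ j₂ := by
        rcases Finset.mem_insert.1 he₀mem with h | h
        · exact h
        · exact absurd h (he₀_not_mem j₁ j₂ M₂)
      have hj : j₁ = j₂ := by
        have : Fin.castSucc j₁ ∈ e₀ j₂ := he₀eq ▸ (by simp [he₀])
        simp only [he₀, Finset.mem_insert, Finset.mem_singleton] at this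
        rcases this with h | h
        · exact hcs h
        · exact absurd h (hcsv j₁)
      subst hj
      rw [he₀eq] at heq
      have hM : edgeMap (f j₁) M₁ = edgeMap (f j₁) M₂ := by
        have := congrArg (fun s => Finset.erase s (e₀ j₁)) heq
        simpa [Finset.erase_insert (he₀_not_mem j₁ j₁ M₁),
          Finset.erase_insert (he₀_not_mem j₁ j₁ M₂)] using this
      rw [edgeMap_injective (hfj j₁) hM]
    · intro M hM
      simp only [hA, hQ, mem_filter, mem_univ, true_and] at hM
      obtain ⟨⟨hmat, hcard⟩, hQM⟩ := hM
      push_neg at hQM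
      obtain ⟨e, he, hve⟩ := hQM
      obtain ⟨x, y, hxy, hexy⟩ := Finset.card_eq_two.1 (hmat.1 e he)
      have hwv : ∃ w, w ≠ v ∧ e = {w, v} := by
        rw [hexy] at hve
        simp only [Finset.mem_insert, Finset.mem_singleton] at hve
        rcases hve with rfl | rfl
        · exact ⟨y, fun h => hxy h.symm, by rw [hexy, Finset.pair_comm]⟩
        · exact ⟨x, hxy, hexy⟩
      obtain ⟨w, hwv, hew⟩ := hwv
      set j : Fin (m + 1) := w.castPred hwv with hj
      have hcsj : Fin.castSucc j = w := Fin.castSucc_castPred w hwv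
      have hwe : w ∈ e := by rw [hew]; simp
      have hvee : v ∈ e := by rw [hew]; simp
      set X := M.erase e with hX
      have hXsub : X ⊆ M := Finset.erase_subset _ _
      have hR : ∀ e' ∈ X, ∀ x ∈ e', x ∈ Set.range (f j) := by
        intro e' he' x hx
        have he'M : e' ∈ M := hXsub he'
        have hne : e' ≠ e := Finset.ne_of_mem_erase he'
        have hd := hmat.2 e' he'M e he hne
        have hxe : x ∉ e := Finset.disjoint_left.1 hd hx
        have hxv : x ≠ v := fun h => hxe (h ▸ hvee)
        have hxw : x ≠ w := fun h => hxe (h ▸ hwe)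
        obtain ⟨z, hz⟩ := Fin.exists_castSucc_eq.2 hxv
        have hzj : z ≠ j := fun h => hxw (by rw [← hz, h, hcsj])
        obtain ⟨u, hu⟩ := Fin.exists_succAbove_eq hzj
        exact ⟨u, by show f j u = x; rw [show f j u = (j.succAbove u).castSucc from rfl, hu, hz]⟩
      set N := edgeComap (hfj j) X with hN
      have hXmat : IsMatching X := isMatching_subset hXsub hmat
      refine ⟨⟨j, N⟩, ?_, ?_⟩
      · simp only [mem_product, mem_filter, mem_univ, true_and]
        refine ⟨isMatching_edgeComap (hfj j) hXmat hR, ?_⟩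
        rw [hN, card_edgeComap (hfj j) hR, hX, Finset.card_erase_of_mem he, hcard]
        omega
      · simp only
        rw [hN, edgeMap_edgeComap (hfj j) hR]
        have : e₀ j = e := by
          show ({Fin.castSucc j, v} : Finset (Fin (m + 2))) = e
          rw [hcsj]; exact hew.symm
        rw [this, hX, Finset.insert_erase he]
  -- put the pieces together
  rw [← hsplit, ← h₁, ← h₂, Finset.card_product, Finset.card_univ, Fintype.card_fin]

/-- Closed formula candidate. -/
def F (m k : ℕ) : ℕ := m.choose (2 * k) * Nat.doubleFactorial (2 * k - 1)

lemma F_zero (m : ℕ) : F m 0 = 1 := by simp [F]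

lemma F_zero_left (k : ℕ) : F 0 (k + 1) = 0 := by
  unfold F; rw [Nat.choose_eq_zero_of_lt (by omega), Nat.zero_mul]

lemma F_one_left (k : ℕ) : F 1 (k + 1) = 0 := by
  unfold F; rw [Nat.choose_eq_zero_of_lt (by omega), Nat.zero_mul]

lemma F_recur (m k : ℕ) : F (m + 2) (k + 1) = F (m + 1) (k + 1) + (m + 1) * F m k := by
  have h1 : 2 * (k + 1) = (2 * k + 1) + 1 := by ring
  have h2 : 2 * (k + 1) - 1 = 2 * k + 1 := by omega
  have h3 : 2 * k - 1 + 2 = 2 * k + 1 ∨ (k = 0 ∧ 2 * k + 1 = 1) := by omega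
  have hdf : Nat.doubleFactorial (2 * k + 1) = (2 * k + 1) * Nat.doubleFactorial (2 * k - 1) := by
    rcases h3 with h3 | ⟨rfl, _⟩
    · rw [← h3, Nat.doubleFactorial_add_two, h3]
    · simp
  have hch : (m + 1).choose (2 * k + 1) * (2 * k + 1) = (m + 1) * m.choose (2 * k) := by
    have h := Nat.add_one_mul_choose_eq m (2 * k)
    omega
  rw [F, F, F, h2, h1, Nat.choose_succ_succ' (m + 1), Nat.add_mul, hdf]
  have key : (m + 1).choose (2 * k + 1) * ((2 * k + 1) * Nat.doubleFactorial (2 * k - 1))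
      = (m + 1) * (m.choose (2 * k) * Nat.doubleFactorial (2 * k - 1)) := by
    rw [← Nat.mul_assoc, hch, Nat.mul_assoc]
  omega

lemma desc_logconcave (j a : ℕ) :
    Nat.descFactorial a j * Nat.descFactorial (a + 2) j ≤ Nat.descFactorial (a + 1) j ^ 2 := by
  induction j with
  | zero => simp
  | succ j ih =>
    rw [Nat.descFactorial_succ, Nat.descFactorial_succ, Nat.descFactorial_succ]
    have key : (a - j) * (a + 2 - j) ≤ (a + 1 - j) ^ 2 := by
      rcases le_or_gt j a with h | h
      · have h1 : a + 1 - j = (a - j) + 1 := by omega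
        have h2 : a + 2 - j = (a - j) + 2 := by omega
        rw [h1, h2]; nlinarith [Nat.zero_le (a - j)]
      · have : a - j = 0 := by omega
        simp [this]
    calc (a - j) * Nat.descFactorial a j * ((a + 2 - j) * Nat.descFactorial (a + 2) j)
        = ((a - j) * (a + 2 - j)) * (Nat.descFactorial a j * Nat.descFactorial (a + 2) j) := by ring
      _ ≤ (a + 1 - j) ^ 2 * Nat.descFactorial (a + 1) j ^ 2 :=
          Nat.mul_le_mul key ih
      _ = ((a + 1 - j) * Nat.descFactorial (a + 1) j) ^ 2 := by ring

lemma choose_logconcave (j a : ℕ) :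
    a.choose j * (a + 2).choose j ≤ (a + 1).choose j ^ 2 := by
  have h := desc_logconcave j a
  rw [Nat.descFactorial_eq_factorial_mul_choose, Nat.descFactorial_eq_factorial_mul_choose,
    Nat.descFactorial_eq_factorial_mul_choose] at h
  have hpos : 0 < j.factorial * j.factorial := Nat.mul_pos j.factorial_pos j.factorial_pos
  refine Nat.le_of_mul_le_mul_left ?_ hpos
  calc j.factorial * j.factorial * (a.choose j * (a + 2).choose j)
      = j.factorial * a.choose j * (j.factorial * (a + 2).choose j) := by ring
    _ ≤ (j.factorial * (a + 1).choose j) ^ 2 := h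
    _ = j.factorial * j.factorial * ((a + 1).choose j ^ 2) := by ring

lemma F_logconcave (a k : ℕ) : F a k * F (a + 2) k ≤ F (a + 1) k ^ 2 := by
  unfold F
  calc a.choose (2 * k) * Nat.doubleFactorial (2 * k - 1) *
        ((a + 2).choose (2 * k) * Nat.doubleFactorial (2 * k - 1))
      = (a.choose (2 * k) * (a + 2).choose (2 * k)) *
          (Nat.doubleFactorial (2 * k - 1)) ^ 2 := by ring
    _ ≤ ((a + 1).choose (2 * k) ^ 2) * (Nat.doubleFactorial (2 * k - 1)) ^ 2 :=
        Nat.mul_le_mul_right _ (choose_logconcave (2 * k) a)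
    _ = ((a + 1).choose (2 * k) * Nat.doubleFactorial (2 * k - 1)) ^ 2 := by ring

theorem matchNum_eq_F : ∀ m k : ℕ, matchNum m k = F m k
  | m, 0 => by rw [matchNum_zero, F_zero]
  | 0, k + 1 => by rw [matchNum_small 0 k (by omega), F_zero_left]
  | 1, k + 1 => by rw [matchNum_small 1 k (by omega), F_one_left]
  | m + 2, k + 1 => by
      rw [matchNum_recur, matchNum_eq_F (m + 1) (k + 1), matchNum_eq_F m k, F_recur]
  termination_by m k => m

/-- The matching numbers of complete graphs are log-concave in the first coordinate. -/
theorem stmt_12 (n k : ℕ) (hn : 1 ≤ n) :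
    matchNum (n - 1) k * matchNum (n + 1) k ≤ matchNum n k ^ 2 := by
  obtain ⟨a, rfl⟩ : ∃ a, n = a + 1 := ⟨n - 1, by omega⟩
  simp only [Nat.add_sub_cancel]
  rw [matchNum_eq_F, matchNum_eq_F, matchNum_eq_F]
  exact F_logconcave a k
end

section
/- If two sequences {a_n}_{n≥1} and {b_n}_{n≥1} are related by b_n = Σ_k C(k, n-k) a_k for all n ≥ 1, then n·a_n = Σ_k C(2n-k-1, n-k) · (-1)^(n-k) · k · b_k for all n ≥ 1. -/
open Finset

private lemma step_mid (n j i : ℕ) (hj : 1 ≤ j) (hi : 1 ≤ i) (hin : j + i < n) :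
    ((n : ℝ) - j) * ((j + i : ℕ) * ((Nat.choose (2*n-j-i-1) (n-j-i) : ℝ) * (Nat.choose j i : ℝ)))
      = (n : ℝ) * j * ((Nat.choose (2*n-j-i-1) (n-j-i-1) : ℝ) * (Nat.choose (j-1) i : ℝ)
          + (Nat.choose (2*n-j-i) (n-j-i) : ℝ) * (Nat.choose (j-1) (i-1) : ℝ)) := by
  rcases le_or_gt i j with hij | hij
  · have ha : Nat.choose (2*n-j-i-1) (n-j-i) * (n-j-i) = Nat.choose (2*n-j-i-1) (n-j-i-1) * n := by
      have h := Nat.choose_succ_right_eq (2*n-j-i-1) (n-j-i-1)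
      rwa [show n-j-i-1+1 = n-j-i by omega, show 2*n-j-i-1 - (n-j-i-1) = n by omega] at h
    have hb : Nat.choose (2*n-j-i-1) (n-j-i) * (2*n-j-i) = Nat.choose (2*n-j-i) (n-j-i) * n := by
      have h := Nat.choose_mul_succ_eq (2*n-j-i-1) (n-j-i)
      rwa [show 2*n-j-i-1+1 = 2*n-j-i by omega, show 2*n-j-i - (n-j-i) = n by omega] at h
    have hc : Nat.choose (j-1) i * j = Nat.choose j i * (j - i) := by
      have h := Nat.choose_mul_succ_eq (j-1) i
      rwa [show j-1+1 = j by omega] at h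
    have hd : j * Nat.choose (j-1) (i-1) = Nat.choose j i * i := by
      have h := Nat.add_one_mul_choose_eq (j-1) (i-1)
      rwa [show j-1+1 = j by omega, show i-1+1 = i by omega] at h
    have HA : (Nat.choose (2*n-j-i-1) (n-j-i) : ℝ) * ((n:ℝ) - j - i)
        = (Nat.choose (2*n-j-i-1) (n-j-i-1) : ℝ) * n := by
      have := congrArg (fun x : ℕ => (x : ℝ)) ha
      push_cast [Nat.cast_sub (show i ≤ n - j by omega), Nat.cast_sub (show j ≤ n by omega)] at this
      linear_combination this
    have HB : (Nat.choose (2*n-j-i-1) (n-j-i) : ℝ) * (2*(n:ℝ) - j - i)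
        = (Nat.choose (2*n-j-i) (n-j-i) : ℝ) * n := by
      have := congrArg (fun x : ℕ => (x : ℝ)) hb
      push_cast [Nat.cast_sub (show i ≤ 2*n - j by omega), Nat.cast_sub (show j ≤ 2*n by omega)] at this
      linear_combination this
    have HC : (Nat.choose (j-1) i : ℝ) * j = (Nat.choose j i : ℝ) * ((j:ℝ) - i) := by
      have := congrArg (fun x : ℕ => (x : ℝ)) hc
      push_cast [Nat.cast_sub hij] at this
      linear_combination this
    have HD : (j:ℝ) * (Nat.choose (j-1) (i-1) : ℝ) = (Nat.choose j i : ℝ) * i := by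
      exact_mod_cast congrArg (fun x : ℕ => (x : ℝ)) hd
    push_cast
    linear_combination ((j:ℝ) * (Nat.choose (j-1) i : ℝ)) * HA
      - ((Nat.choose (2*n-j-i-1) (n-j-i) : ℝ) * ((n:ℝ) - j - i)) * HC
      + ((j:ℝ) * (Nat.choose (j-1) (i-1) : ℝ)) * HB
      - ((Nat.choose (2*n-j-i-1) (n-j-i) : ℝ) * (2*(n:ℝ) - j - i)) * HD
  · have h1 : Nat.choose j i = 0 := Nat.choose_eq_zero_of_lt hij
    have h2 : Nat.choose (j-1) i = 0 := Nat.choose_eq_zero_of_lt (by omega)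
    have h3 : Nat.choose (j-1) (i-1) = 0 := Nat.choose_eq_zero_of_lt (by omega)
    simp [h1, h2, h3]

private lemma inner_zero (n j : ℕ) (hj : 1 ≤ j) (hjn : j < n) :
    ∑ k ∈ Icc j n, (Nat.choose (2*n-k-1) (n-k) : ℝ) * (-1)^(n-k) * (k:ℝ) * (Nat.choose j (k-j) : ℝ) = 0 := by
  set T : ℕ → ℝ := fun k =>
    (Nat.choose (2*n-k-1) (n-k) : ℝ) * (-1)^(n-k) * (k:ℝ) * (Nat.choose j (k-j) : ℝ) with hT
  set g : ℕ → ℝ := fun i =>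
    if 1 ≤ i ∧ i ≤ n - j then
      (-1:ℝ)^(n-j-i+1) * n * j * (Nat.choose (2*n-j-i) (n-j-i) : ℝ) * (Nat.choose (j-1) (i-1) : ℝ)
    else 0 with hg
  have hcast : (j:ℝ) < n := by exact_mod_cast hjn
  have hc : ((n:ℝ) - j) ≠ 0 := by linarith
  have step : ∀ i ∈ range (n-j+1), ((n:ℝ) - j) * T (j+i) = g (i+1) - g i := by
    intro i hi
    simp only [mem_range] at hi
    have hi' : i ≤ n - j := by omega
    rcases Nat.eq_zero_or_pos i with rfl | hipos
    · -- i = 0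
      have hg1 : g 1 = (-1:ℝ)^(n-j) * n * j * (Nat.choose (2*n-j-1) (n-j-1) : ℝ) := by
        simp only [hg]
        rw [if_pos (⟨le_refl 1, by omega⟩ : (1:ℕ) ≤ 1 ∧ 1 ≤ n - j)]
        rw [show n-j-1+1 = n-j by omega]
        norm_num
      have hg0 : g 0 = 0 := by simp [hg]
      rw [hg1, hg0, sub_zero]
      simp only [hT, Nat.add_zero, Nat.sub_self, Nat.choose_zero_right]
      have ha : Nat.choose (2*n-j-1) (n-j) * (n-j) = Nat.choose (2*n-j-1) (n-j-1) * n := by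
        have h := Nat.choose_succ_right_eq (2*n-j-1) (n-j-1)
        rwa [show n-j-1+1 = n-j by omega, show 2*n-j-1 - (n-j-1) = n by omega] at h
      have HA : (Nat.choose (2*n-j-1) (n-j) : ℝ) * ((n:ℝ) - j)
          = (Nat.choose (2*n-j-1) (n-j-1) : ℝ) * n := by
        have := congrArg (fun x : ℕ => (x : ℝ)) ha
        push_cast [Nat.cast_sub (show j ≤ n by omega)] at this
        linear_combination this
      push_cast
      linear_combination ((-1:ℝ)^(n-j) * (j:ℝ)) * HA
    · rcases eq_or_lt_of_le hi' with heq | hlt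
      · -- i = n - j : last step
        have hgi1 : g (i+1) = 0 := by
          simp only [hg]
          rw [if_neg (by omega)]
        have hgi : g i = -((n:ℝ) * j * (Nat.choose (j-1) (n-j-1) : ℝ)) := by
          simp only [hg]
          rw [if_pos ⟨hipos, hi'⟩, heq]
          rw [show n-j-(n-j) = 0 by omega, show 2*n-j-(n-j) = n by omega]
          norm_num
        rw [hgi1, hgi, sub_neg_eq_add, zero_add]
        simp only [hT]
        rw [show j + i = n by omega]
        rw [show 2*n-n-1 = n-1 by omega, Nat.sub_self]
        simp only [Nat.choose_zero_right, pow_zero, Nat.cast_one, one_mul, mul_one]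
        have hd : j * Nat.choose (j-1) (n-j-1) = Nat.choose j (n-j) * (n-j) := by
          have h := Nat.add_one_mul_choose_eq (j-1) (n-j-1)
          rwa [show j-1+1 = j by omega, show n-j-1+1 = n-j by omega] at h
        have HD : (j:ℝ) * (Nat.choose (j-1) (n-j-1) : ℝ)
            = (Nat.choose j (n-j) : ℝ) * ((n:ℝ) - j) := by
          have := congrArg (fun x : ℕ => (x : ℝ)) hd
          push_cast [Nat.cast_sub (show j ≤ n by omega)] at this
          linear_combination this
        linear_combination (-(n:ℝ)) * HD
      · -- middle step
        have hin : j + i < n := by omega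
        have hgi1 : g (i+1) = (-1:ℝ)^(n-j-i) * n * j
            * (Nat.choose (2*n-j-i-1) (n-j-i-1) : ℝ) * (Nat.choose (j-1) i : ℝ) := by
          simp only [hg]
          rw [if_pos (⟨by omega, by omega⟩ : (1:ℕ) ≤ i+1 ∧ i+1 ≤ n-j)]
          rw [show n-j-(i+1)+1 = n-j-i by omega, show 2*n-j-(i+1) = 2*n-j-i-1 by omega,
            show n-j-(i+1) = n-j-i-1 by omega, show i+1-1 = i by omega]
        have hgi : g i = -((-1:ℝ)^(n-j-i) * n * j
            * (Nat.choose (2*n-j-i) (n-j-i) : ℝ) * (Nat.choose (j-1) (i-1) : ℝ)) := by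
          simp only [hg]
          rw [if_pos ⟨hipos, hi'⟩, pow_succ]
          ring
        rw [hgi1, hgi, sub_neg_eq_add]
        simp only [hT]
        rw [show 2*n-(j+i)-1 = 2*n-j-i-1 by omega, show n-(j+i) = n-j-i by omega,
          show j+i-j = i by omega]
        have := step_mid n j i hj hipos hin
        push_cast at this ⊢
        linear_combination ((-1:ℝ)^(n-j-i)) * this
  have hsum : ∑ k ∈ Icc j n, T k = ∑ i ∈ range (n-j+1), T (j+i) := by
    rw [show n-j+1 = n+1-j by omega, ← Finset.Ico_add_one_right_eq_Icc, Finset.sum_Ico_eq_sum_range]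
  have hz : ((n:ℝ) - j) * ∑ k ∈ Icc j n, T k = 0 := by
    rw [hsum, Finset.mul_sum, Finset.sum_congr rfl step, Finset.sum_range_sub]
    have h1 : g (n-j+1) = 0 := by
      simp only [hg]; rw [if_neg (by omega)]
    have h0 : g 0 = 0 := by simp [hg]
    rw [h1, h0, sub_zero]
  rcases mul_eq_zero.mp hz with h | h
  · exact absurd h hc
  · exact h

/-- If `b_n = Σ_k C(k, n-k) a_k` for all `n ≥ 1`, then
`n·a_n = Σ_k C(2n-k-1, n-k) (-1)^(n-k) k b_k` for all `n ≥ 1`.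
(For each `n`, the nonzero terms of both sums have `1 ≤ k ≤ n`.) -/
theorem stmt_15 (a b : ℕ → ℝ)
    (hab : ∀ n : ℕ, 1 ≤ n →
      b n = ∑ k ∈ Finset.Icc 1 n, (Nat.choose k (n - k) : ℝ) * a k) :
    ∀ n : ℕ, 1 ≤ n →
      (n : ℝ) * a n =
        ∑ k ∈ Finset.Icc 1 n,
          (Nat.choose (2 * n - k - 1) (n - k) : ℝ) * (-1) ^ (n - k) * k * b k := by
  intro n hn
  symm
  have hrw : ∀ k ∈ Icc 1 n,
      (Nat.choose (2*n-k-1) (n-k) : ℝ) * (-1)^(n-k) * k * b k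
        = ∑ j ∈ Icc 1 k, ((Nat.choose (2*n-k-1) (n-k) : ℝ) * (-1)^(n-k) * k)
            * ((Nat.choose j (k-j) : ℝ) * a j) := by
    intro k hk
    simp only [mem_Icc] at hk
    rw [hab k hk.1, Finset.mul_sum]
  rw [Finset.sum_congr rfl hrw]
  rw [Finset.sum_comm' (t' := Icc 1 n) (s' := fun j => Icc j n)
    (by intro k j; simp only [mem_Icc]; omega)]
  have hinner : ∀ j ∈ Icc 1 n,
      (∑ k ∈ Icc j n, ((Nat.choose (2*n-k-1) (n-k) : ℝ) * (-1)^(n-k) * k)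
          * ((Nat.choose j (k-j) : ℝ) * a j))
        = (∑ k ∈ Icc j n, (Nat.choose (2*n-k-1) (n-k) : ℝ) * (-1)^(n-k) * (k:ℝ)
            * (Nat.choose j (k-j) : ℝ)) * a j := by
    intro j hj
    rw [Finset.sum_mul]
    exact Finset.sum_congr rfl fun k _ => by ring
  rw [Finset.sum_congr rfl hinner]
  rw [Finset.sum_eq_single_of_mem n (by simp only [mem_Icc]; omega)]
  · rw [Finset.Icc_self, Finset.sum_singleton, Nat.sub_self]
    simp
  · intro j hj hne
    simp only [mem_Icc] at hj
    rw [inner_zero n j hj.1 (by omega), zero_mul]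
end
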